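/- arXiv:1310.2407 — 7 statements merged into one kernel-verified Lean document; each statement's English description precedes it below -/
import Mathlib

section
/- Let j ≥ 1 and k ≥ 0 be integers, and let a_k^{(n)} (k, n ≥ 0) be complex numbers. Suppose that for each k' ∈ {k, k+1, …, k+j−1} there are nonzero complex numbers r_{1,k'}, …, r_{j,k'} with |r_{1,k'}| > |r_{2,k'}| > … > |r_{j,k'}|, nonzero complex constants c_{1,k'}, …, c_{j,k'}, reals ρ_{k'} with 0 < ρ_{k'} < |r_{j,k'}| and μ_{k'} > 0, and a sequence (b_{k'}^{(n)})_{n≥0} with |b_{k'}^{(n)}| ≤ μ_{k'} ρ_{k'}^n, such that a_{k'}^{(n)} = Σ_{ℓ=1}^{j} c_{ℓ,k'} r_{ℓ,k'}^{n+k'+1} + b_{k'}^{(n)} for all n ≥ 0. For each tuple κ = (κ_1, …, κ_j) ∈ {1, …, j}^j define the constant c_κ as the determinant of the j×j matrix whose (s, ℓ) entry, for s = 0, …, j−1 and ℓ = 1, …, j, is c_{κ_ℓ, k+ℓ−1} r_{κ_ℓ, k+ℓ−1}^{k+ℓ+s}. Then there exists a constant K > 0 such that for all n ≥ 0, |C_{k,j}^{(n)}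 − Σ_{κ ∈ {1,…,j}^j} c_κ (Π_{ℓ=1}^{j} r_{κ_ℓ, k+ℓ−1})^n| ≤ K Σ_{ℓ=1}^{j} (ρ_{k+ℓ−1} Π_{m=1, m≠ℓ}^{j} |r_{1, k+m−1}|)^n. -/
/-- The Casorati determinant: `C_{k,0}^{(n)} = 1` and for `j ≥ 1`,
`C_{k,j}^{(n)} = det (a_{k+ℓ}^{(n+s)})_{s,ℓ = 0,…,j-1}`. -/
noncomputable def casorati (a : ℕ → ℕ → ℂ) (k j n : ℕ) : ℂ :=
  Matrix.det (Matrix.of fun s ℓ : Fin j => a (k + (ℓ : ℕ)) (n + (s : ℕ)))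

/-! Split each entry `a_{k+ℓ}^{(n+s)}` into its `j + 1` summands: the `j` geometric terms and the
remainder `b_{k+ℓ}^{(n+s)}`. By multilinearity in the columns, `C_{k,j}^{(n)}` is the sum, over all
choices of one summand per column, of the resulting determinants. Choices without remainder give
exactly `c_κ (∏ r_{κ_ℓ,k+ℓ-1})^n`. In a choice with the remainder in column `ℓ`, that column is
`O(ρ_{k+ℓ-1}^n)` and, since `ρ_{k'} < |r_{j,k'}| ≤ |r_{1,k'}|`, every other column `m` is
`O(|r_{1,k+m-1}|^n)`; so the determinant is `O((ρ_{k+ℓ-1} ∏_{m ≠ ℓ} |r_{1,k+m-1}|)^n)`, uniformly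
in `n`. -/

open Finset Asymptotics Matrix

theorem Asymptotics.IsBigO.exists_pos_forall_le {α E : Type*} [Norm E] {f : α → E} {g : α → ℝ}
    (h : f =O[⊤] g) (hg : ∀ x, 0 ≤ g x) : ∃ K > 0, ∀ x, ‖f x‖ ≤ K * g x := by
  obtain ⟨K, hK, hfg⟩ := h.exists_pos
  exact ⟨K, hK, fun x => by simpa [Real.norm_of_nonneg (hg x)] using isBigOWith_top.1 hfg x⟩

theorem Fintype.sum_pi_option_sub_sum_pi_some {n ι M : Type*} [Fintype n] [DecidableEq n]
    [Fintype ι] [DecidableEq ι] [AddCommGroup M] (f : (n → Option ι) → M) :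
    ∑ κ, f κ - ∑ κ : n → ι, f (fun i => some (κ i)) =
      ∑ κ ∈ univ.filter (fun κ => ∃ i, κ i = none), f κ := by
  rw [sub_eq_iff_eq_add', ← sum_filter_not_add_sum_filter univ (fun κ => ∃ i, κ i = none)]
  congr 1
  refine (sum_nbij (fun (κ : n → ι) i => some (κ i)) (fun κ _ => by simp) ?_ ?_ fun _ _ => rfl).symm
  · exact fun κ _ κ' _ h => funext fun i => Option.some_injective _ (congrFun h i)
  · intro κ hκ
    simp only [coe_filter, mem_univ, true_and, not_exists, Set.mem_ofPred_eq] at hκ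
    choose κ' hκ' using fun i => Option.ne_none_iff_exists'.1 (hκ i)
    exact ⟨κ', mem_coe.2 (mem_univ _), funext fun i => (hκ' i).symm⟩

namespace Matrix

variable {n : Type*} [Fintype n] [DecidableEq n]

theorem det_of_col_sum {ι R : Type*} [Fintype ι] [CommRing R] (g : n → ι → n → R) :
    det (of fun s i => ∑ t, g i t s) = ∑ κ : n → ι, det (of fun s i => g i (κ i) s) := by
  simp_rw [← det_transpose (of _)]
  convert (detRowAlternating : (n → R) [⋀^n]→ₗ[R] R).toMultilinearMap.map_sum g using 2
  all_goals exact congrArg detRowAlternating (by ext; simp)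

theorem isBigO_det {α R : Type*} [SeminormedCommRing R] {l : Filter α} {M : α → Matrix n n R}
    {g : n → α → ℝ} (h : ∀ s i, (fun x => M x s i) =O[l] g i) :
    (fun x => (M x).det) =O[l] fun x => ∏ i, g i x := by
  simp only [det_apply, Units.smul_def, zsmul_eq_mul]
  exact IsBigO.fun_sum fun σ _ =>
    (IsBigO.finsetProd fun i _ => h (σ i) i).const_mul_left _

end Matrix

/-- The summands of `a_{k'}^{(m)}`: `c_{t,k'} r_{t,k'}^{m+k'+1}` at `some t`, and the remainder
`b_{k'}^{(m)}` at `none`. -/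
noncomputable def casoratiSummand {j : ℕ} (b : ℕ → ℕ → ℂ) (r c : ℕ → Fin j → ℂ) (k' : ℕ) :
    Option (Fin j) → ℕ → ℂ
  | none, m => b k' m
  | some t, m => c k' t * r k' t ^ (m + k' + 1)

section casoratiSummand

variable {j k : ℕ} {b : ℕ → ℕ → ℂ} {r c : ℕ → Fin j → ℂ}

theorem casorati_eq_sum_det_casoratiSummand {a : ℕ → ℕ → ℂ}
    (ha : ∀ d < j, ∀ n : ℕ,
      a (k + d) n = (∑ ℓ, c (k + d) ℓ * r (k + d) ℓ ^ (n + (k + d) + 1)) + b (k + d) n)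
    (n : ℕ) :
    casorati a k j n = ∑ κ : Fin j → Option (Fin j),
      det (of fun s ℓ : Fin j => casoratiSummand b r c (k + ℓ) (κ ℓ) (n + s)) := by
  rw [casorati,
    ← det_of_col_sum fun (ℓ : Fin j) t (s : Fin j) => casoratiSummand b r c (k + ℓ) t (n + s)]
  congr 1
  ext s ℓ
  simp [ha ℓ ℓ.2, Fintype.sum_option, casoratiSummand, add_comm]

theorem det_casoratiSummand_some (κ : Fin j → Fin j) (n : ℕ) :
    det (of fun s ℓ : Fin j => casoratiSummand b r c (k + ℓ) (some (κ ℓ)) (n + s)) =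
      det (of fun s ℓ : Fin j => c (k + ℓ) (κ ℓ) * r (k + ℓ) (κ ℓ) ^ (k + ℓ + 1 + s)) *
        (∏ ℓ : Fin j, r (k + ℓ) (κ ℓ)) ^ n := by
  rw [← prod_pow, mul_comm, ← det_mul_row]
  congr 1
  ext s ℓ
  simp only [casoratiSummand, of_apply]
  ring

theorem isBigO_casoratiSummand {k' : ℕ} {ρ μ R : ℝ} (hR : ∀ t, ‖r k' t‖ ≤ R)
    (hb : ∀ m, ‖b k' m‖ ≤ μ * ρ ^ m) (t : Option (Fin j)) (s : ℕ) :
    (fun n => casoratiSummand b r c k' t (n + s)) =O[⊤] fun n => t.elim ρ (fun _ => R) ^ n := by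
  cases t with
  | none =>
    refine isBigO_of_le' (c := ‖μ * ρ ^ s‖) ⊤ fun n => ?_
    calc ‖b k' (n + s)‖ ≤ μ * ρ ^ (n + s) := hb _
      _ = μ * ρ ^ s * ρ ^ n := by ring
      _ ≤ ‖μ * ρ ^ s‖ * ‖ρ ^ n‖ := (Real.le_norm_self _).trans (norm_mul_le _ _)
  | some t =>
    refine isBigO_of_le' (c := ‖c k' t * r k' t ^ (s + k' + 1)‖) ⊤ fun n => ?_
    calc ‖casoratiSummand b r c k' (some t) (n + s)‖
        = ‖c k' t * r k' t ^ (s + k' + 1)‖ * ‖r k' t‖ ^ n := by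
          simp only [casoratiSummand, norm_mul, norm_pow]; ring
      _ ≤ ‖c k' t * r k' t ^ (s + k' + 1)‖ * ‖R ^ n‖ := by
          rw [norm_pow]
          gcongr
          exact (hR t).trans (Real.le_norm_self R)

theorem isBigO_det_casoratiSummand_of_eq_none {ρ μ : ℕ → ℝ} {R : Fin j → ℝ}
    (hR : ∀ (ℓ t : Fin j), ‖r (k + ℓ) t‖ ≤ R ℓ) (hρ : ∀ ℓ : Fin j, 0 ≤ ρ (k + ℓ))
    (hρR : ∀ ℓ : Fin j, ρ (k + ℓ) ≤ R ℓ)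
    (hb : ∀ (ℓ : Fin j) (m : ℕ), ‖b (k + ℓ) m‖ ≤ μ (k + ℓ) * ρ (k + ℓ) ^ m)
    {κ : Fin j → Option (Fin j)} {ℓ₀ : Fin j} (hκ : κ ℓ₀ = none) :
    (fun n => det (of fun s ℓ : Fin j => casoratiSummand b r c (k + ℓ) (κ ℓ) (n + s))) =O[⊤]
      fun n => (ρ (k + ℓ₀) * ∏ m ∈ univ.erase ℓ₀, R m) ^ n := by
  set rate : Fin j → ℝ := fun ℓ => (κ ℓ).elim (ρ (k + ℓ)) fun _ => R ℓ
  have hrate : ∀ ℓ, 0 ≤ rate ℓ ∧ rate ℓ ≤ R ℓ := fun ℓ => by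
    simp only [rate]
    rcases κ ℓ with _ | _
    · exact ⟨hρ ℓ, hρR ℓ⟩
    · exact ⟨(hρ ℓ).trans (hρR ℓ), le_rfl⟩
  refine (isBigO_det fun s ℓ => isBigO_casoratiSummand (hR ℓ) (hb ℓ) (κ ℓ) s).trans
    (isBigO_of_le _ fun n => ?_)
  rw [prod_pow, norm_pow, norm_pow]
  gcongr
  calc ‖∏ ℓ, rate ℓ‖ = rate ℓ₀ * ∏ ℓ ∈ univ.erase ℓ₀, rate ℓ := by
        rw [Real.norm_of_nonneg (prod_nonneg fun ℓ _ => (hrate ℓ).1),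
          mul_prod_erase _ _ (mem_univ ℓ₀)]
    _ ≤ ρ (k + ℓ₀) * ∏ m ∈ univ.erase ℓ₀, R m := by
        rw [show rate ℓ₀ = ρ (k + ℓ₀) by simp [rate, hκ]]
        gcongr with ℓ
        exacts [hρ ℓ₀, fun ℓ _ => (hrate ℓ).1, (hrate ℓ).2]
    _ ≤ ‖ρ (k + ℓ₀) * ∏ m ∈ univ.erase ℓ₀, R m‖ := Real.le_norm_self _

end casoratiSummand

theorem casorati_asymptotic_general
    (j k : ℕ) (hj : 1 ≤ j)
    (a b : ℕ → ℕ → ℂ)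
    (r c : ℕ → Fin j → ℂ) (ρ μ : ℕ → ℝ)
    (hrdec : ∀ d < j, ∀ ℓ₁ ℓ₂ : Fin j, ℓ₁ < ℓ₂ → ‖r (k + d) ℓ₂‖ < ‖r (k + d) ℓ₁‖)
    (hρpos : ∀ d < j, 0 < ρ (k + d))
    (hρlt : ∀ d < j, ρ (k + d) < ‖r (k + d) ⟨j - 1, by omega⟩‖)
    (hb : ∀ d < j, ∀ n : ℕ, ‖b (k + d) n‖ ≤ μ (k + d) * ρ (k + d) ^ n)
    (ha : ∀ d < j, ∀ n : ℕ,
      a (k + d) n = (∑ ℓ, c (k + d) ℓ * r (k + d) ℓ ^ (n + (k + d) + 1)) + b (k + d) n) :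
    ∃ K > 0, ∀ n : ℕ,
      ‖casorati a k j n -
        ∑ κ : Fin j → Fin j,
          Matrix.det (Matrix.of fun s ℓ : Fin j =>
            c (k + (ℓ : ℕ)) (κ ℓ) * r (k + (ℓ : ℕ)) (κ ℓ) ^ (k + (ℓ : ℕ) + 1 + (s : ℕ))) *
          (∏ ℓ : Fin j, r (k + (ℓ : ℕ)) (κ ℓ)) ^ n‖ ≤
      K * ∑ ℓ : Fin j,
        (ρ (k + (ℓ : ℕ)) *
          ∏ m ∈ Finset.univ.erase ℓ, ‖r (k + (m : ℕ)) ⟨0, by omega⟩‖) ^ n := by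
  set R : Fin j → ℝ := fun m => ‖r (k + m) ⟨0, by omega⟩‖
  have hρ : ∀ ℓ : Fin j, 0 ≤ ρ (k + ℓ) := fun ℓ => (hρpos ℓ ℓ.2).le
  have hR : ∀ ℓ t : Fin j, ‖r (k + ℓ) t‖ ≤ R ℓ := fun ℓ t =>
    StrictAnti.antitone (hrdec ℓ ℓ.2) (Nat.zero_le t.val)
  have hρR : ∀ ℓ : Fin j, ρ (k + ℓ) ≤ R ℓ := fun ℓ => (hρlt ℓ ℓ.2).le.trans (hR ℓ _)
  have hT : ∀ (ℓ : Fin j) n, 0 ≤ (ρ (k + ℓ) * ∏ m ∈ univ.erase ℓ, R m) ^ n := fun ℓ n =>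
    pow_nonneg (mul_nonneg (hρ ℓ) (prod_nonneg fun m _ => norm_nonneg _)) n
  refine IsBigO.exists_pos_forall_le ?_ fun n => sum_nonneg fun ℓ _ => hT ℓ n
  simp_rw [casorati_eq_sum_det_casoratiSummand ha, ← det_casoratiSummand_some (b := b),
    Fintype.sum_pi_option_sub_sum_pi_some]
  refine IsBigO.fun_sum fun κ hκ => ?_
  obtain ⟨ℓ₀, hℓ₀⟩ : ∃ ℓ, κ ℓ = none := by simpa using hκ
  refine (isBigO_det_casoratiSummand_of_eq_none hR hρ hρR (fun ℓ => hb ℓ ℓ.2) hℓ₀).trans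
    (isBigO_of_le _ fun n => ?_)
  rw [Real.norm_of_nonneg (hT ℓ₀ n), Real.norm_of_nonneg (sum_nonneg fun ℓ _ => hT ℓ n)]
  exact single_le_sum (fun ℓ _ => hT ℓ n) (mem_univ ℓ₀)
end

section
/- Let M ≥ 1 and j ≥ 1 be integers, let n ≥ 0, and let a_k^{(n)} (k, n ≥ 0) be complex numbers. Then τ_{j(M+1)}^{(n)} = Π_{ℓ=0}^{M} G_{ℓ,j}^{(n)}. -/
/-- `G_{i,0}^{(n)} = 1` and, for `j ≥ 1`,
`G_{i,j}^{(n)} = det (a_{i+Ms+ℓ}^{(n)})_{s,ℓ = 0,…,j-1}`. -/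
noncomputable def Gdet (M : ℕ) (a : ℕ → ℕ → ℂ) (i j n : ℕ) : ℂ :=
  Matrix.det (Matrix.of fun s ℓ : Fin j => a (i + M * (s : ℕ) + (ℓ : ℕ)) n)

/-- The tau-function `τ_k^{(n)}` for `k = i + j(M+1)` with `j = k / (M+1)` and
`i = k % (M+1)`: the determinant of the `(j(M+1)+i) × (j(M+1)+i)` block matrix
described in the paper (rows/columns indexed by `(Fin j × Fin (M+1)) ⊕ Fin i`,
where the pair `(p, s)` stands for the row `p(M+1)+s` and `inr s` for the row
`j(M+1)+s`, and similarly for columns). `τ_0^{(n)} = 1`. -/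
noncomputable def tau (M : ℕ) (a : ℕ → ℕ → ℂ) (k n : ℕ) : ℂ :=
  Matrix.det (Matrix.of
    fun rr cc : (Fin (k / (M + 1)) × Fin (M + 1)) ⊕ Fin (k % (M + 1)) =>
      match rr, cc with
      | Sum.inl (p, s), Sum.inl (q, t) =>
          if (s : ℕ) = (t : ℕ) then a ((p : ℕ) * M + (q : ℕ) + (s : ℕ)) n else 0
      | Sum.inl (p, s), Sum.inr t =>
          if (s : ℕ) = (t : ℕ) then a ((p : ℕ) * M + k / (M + 1) + (s : ℕ)) n else 0
      | Sum.inr s, Sum.inl (q, t) =>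
          if (s : ℕ) = (t : ℕ) then a ((k / (M + 1)) * M + (q : ℕ) + (s : ℕ)) n else 0
      | Sum.inr s, Sum.inr t =>
          if (s : ℕ) = (t : ℕ) then a ((k / (M + 1)) * (M + 1) + (s : ℕ)) n else 0)

/-! With rows and columns indexed by pairs `(p, s)`, the entry of `τ_{j(M+1)}` vanishes unless the
two `s`-coordinates agree, so the matrix is block diagonal with blocks `(a_{pM+q+s})_{p,q}`, and the
`s`-th block is the matrix of `G_{s,j}` read with `p` as the row index. -/

open Matrix

def tauBlock (M : ℕ) (a : ℕ → ℕ → ℂ) (j n : ℕ) (s : Fin (M + 1)) : Matrix (Fin j) (Fin j) ℂ :=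
  of fun p q => a ((p : ℕ) * M + (q : ℕ) + (s : ℕ)) n

theorem det_tauBlock (M : ℕ) (a : ℕ → ℕ → ℂ) (j n : ℕ) (s : Fin (M + 1)) :
    (tauBlock M a j n s).det = Gdet M a s j n := by
  unfold tauBlock Gdet
  congr 2
  ext p q
  congr 1
  ring

def tauIndexEquiv (M j : ℕ) :
    (Fin (j * (M + 1) / (M + 1)) × Fin (M + 1)) ⊕ Fin (j * (M + 1) % (M + 1)) ≃
      Fin j × Fin (M + 1) :=
  (Equiv.sumCongr
      (Equiv.prodCongr (finCongr (Nat.mul_div_cancel j M.succ_pos)) (Equiv.refl _))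
      (finCongr (Nat.mul_mod_left j (M + 1)))).trans
    (Equiv.sumEmpty _ _)

theorem tau_mul_eq_det_blockDiagonal (M : ℕ) (a : ℕ → ℕ → ℂ) (j n : ℕ) :
    tau M a (j * (M + 1)) n =
      ((blockDiagonal (tauBlock M a j n)).submatrix (tauIndexEquiv M j)
        (tauIndexEquiv M j)).det := by
  unfold tau
  congr 1
  have : IsEmpty (Fin (j * (M + 1) % (M + 1))) := by
    rw [Nat.mul_mod_left]; infer_instance
  ext (⟨p, s⟩ | s) (⟨q, t⟩ | t)
  · simp [tauIndexEquiv, tauBlock, blockDiagonal_apply, Fin.val_eq_val]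
  all_goals exact isEmptyElim ‹Fin (j * (M + 1) % (M + 1))›

theorem tau_block_diagonal_general
    (M j n : ℕ) (a : ℕ → ℕ → ℂ) :
    tau M a (j * (M + 1)) n = ∏ ℓ ∈ Finset.range (M + 1), Gdet M a ℓ j n := by
  rw [tau_mul_eq_det_blockDiagonal, det_submatrix_equiv_self, det_blockDiagonal,
    ← Fin.prod_univ_eq_prod_range]
  simp only [det_tauBlock]

theorem tau_block_diagonal
    (M j n : ℕ) (hM : 1 ≤ M) (hj : 1 ≤ j) (a : ℕ → ℕ → ℂ) :
    tau M a (j * (M + 1)) n = ∏ ℓ ∈ Finset.range (M + 1), Gdet M a ℓ j n :=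
  tau_block_diagonal_general M j n a
end

section
/- Let M ≥ 1 be an integer, let 1 ≤ i ≤ M and j ≥ 0 be integers, let n ≥ 0, and let a_k^{(n)} (k, n ≥ 0) be complex numbers. Then τ_{i+j(M+1)}^{(n)} = (Π_{ℓ=0}^{i−1} G_{ℓ,j+1}^{(n)}) (Π_{ℓ=i}^{M} G_{ℓ,j}^{(n)}). -/
/-!
Every entry of the tau matrix in row `(p, s)` and column `(q, t)` vanishes unless `s = t`,
in which case it is `a_{s + Mp + q}`; the border rows and columns fit the same formula
with level `p = j` resp. `q = j`. Grouping rows and columns by the residue `s` therefore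
makes the matrix block diagonal, and block `s` is the matrix `(a_{s + Mp + q})` of
`G_{s, j+1}` when `s < i` (it contains a border row and column) and of `G_{s, j}` otherwise.
-/

namespace Matrix

variable {ι κ R : Type*} [Fintype ι] [DecidableEq ι] [CommRing R]

theorem det_toSquareBlock_eq_of_bijOn [DecidableEq κ] (A : Matrix ι ι R) (c : ι → κ) (k : κ)
    (r : ι → ℕ) (m : ℕ) (f : ℕ → ℕ → R) (hA : ∀ x y, c x = k → c y = k → A x y = f (r x) (r y))
    (hr : Set.BijOn r {x | c x = k} (Set.Iio m)) :
    (A.toSquareBlock c k).det = (of fun p q : Fin m => f p q).det := by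
  let e : {x // c x = k} ≃ Fin m := Equiv.ofBijective (fun x => ⟨r x, hr.mapsTo x.2⟩)
    ⟨fun x y h => Subtype.ext (hr.injOn x.2 y.2 (congrArg Fin.val h)),
      fun p => let ⟨x, hx, hxp⟩ := hr.surjOn p.2; ⟨⟨x, hx⟩, Fin.ext hxp⟩⟩
  have hre : ∀ p, r (e.symm p) = p := fun p => congrArg Fin.val (e.apply_symm_apply p)
  rw [← det_submatrix_equiv_self e.symm]
  congr 1
  ext p q
  simp only [submatrix_apply, toSquareBlock_def, of_apply]
  rw [hA _ _ (e.symm p).2 (e.symm q).2, hre, hre]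

theorem det_eq_prod_of_bijOn [Fintype κ] [LinearOrder κ] (A : Matrix ι ι R) (c : ι → κ)
    (r : ι → ℕ) (m : κ → ℕ) (f : κ → ℕ → ℕ → R)
    (hA : ∀ x y, A x y = if c x = c y then f (c x) (r x) (r y) else 0)
    (hr : ∀ k, Set.BijOn r {x | c x = k} (Set.Iio (m k))) :
    A.det = ∏ k, (of fun p q : Fin (m k) => f k p q).det := by
  have hA_block : A.BlockTriangular c := fun x y h => by rw [hA, if_neg h.ne']
  rw [hA_block.det_fintype]
  refine Finset.prod_congr rfl fun k _ => det_toSquareBlock_eq_of_bijOn A c k r (m k) (f k)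
    (fun x y hx hy => by rw [hA, if_pos (hx.trans hy.symm), hx]) (hr k)

end Matrix

section Tau

variable (M k : ℕ)

abbrev TauIndex := (Fin (k / (M + 1)) × Fin (M + 1)) ⊕ Fin (k % (M + 1))

/-- Row `inl (p, s)` stands for row `p(M+1) + s` of the paper's matrix, at level `p` and
residue `s`; the border row `inr s` has level `k / (M+1)`. -/
def tauResidue : TauIndex M k → Fin (M + 1)
  | .inl (_, s) => s
  | .inr s => Fin.castLE (Nat.mod_lt k (Nat.add_one_pos M)).le s

def tauLevel : TauIndex M k → ℕ
  | .inl (p, _) => p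
  | .inr _ => k / (M + 1)

theorem tau_eq_det (a : ℕ → ℕ → ℂ) (n : ℕ) :
    tau M a k n = Matrix.det (Matrix.of fun x y : TauIndex M k =>
      if tauResidue M k x = tauResidue M k y then
        a (tauResidue M k x + M * tauLevel M k x + tauLevel M k y) n
      else 0) := by
  unfold tau
  congr 1
  ext (⟨p, s⟩ | s) (⟨q, t⟩ | t) <;>
    simp only [Matrix.of_apply, tauResidue, tauLevel, Fin.ext_iff, Fin.val_castLE] <;>
    split_ifs with h <;> first | rfl | (rw [h]; congr 1; ring)

theorem tauLevel_bijOn (s : Fin (M + 1)) :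
    Set.BijOn (tauLevel M k) {x | tauResidue M k x = s}
      (Set.Iio (if (s : ℕ) < k % (M + 1) then k / (M + 1) + 1 else k / (M + 1))) := by
  refine ⟨?_, ?_, ?_⟩
  · rintro (⟨p, s'⟩ | s') rfl
    · simp only [tauLevel, Set.mem_Iio]
      split_ifs <;> omega
    · simp [tauLevel, tauResidue]
  · rintro (⟨p, s'⟩ | s') rfl (⟨q, t⟩ | t) ht h <;>
      simp_all [tauLevel, tauResidue, Fin.ext_iff] <;> omega
  · intro p hp
    by_cases hpj : p < k / (M + 1)
    · exact ⟨.inl (⟨p, hpj⟩, s), rfl, rfl⟩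
    · have hs : (s : ℕ) < k % (M + 1) := by
        by_contra hs
        exact hpj (by rwa [Set.mem_Iio, if_neg hs] at hp)
      rw [Set.mem_Iio, if_pos hs] at hp
      exact ⟨.inr ⟨s, hs⟩, rfl, by simp only [tauLevel]; omega⟩

variable (a : ℕ → ℕ → ℂ) (n : ℕ)

theorem tau_eq_prod_Gdet :
    tau M a k n = ∏ s : Fin (M + 1),
      Gdet M a s (if (s : ℕ) < k % (M + 1) then k / (M + 1) + 1 else k / (M + 1)) n :=
  (tau_eq_det M k a n).trans <| Matrix.det_eq_prod_of_bijOn _ (tauResidue M k) (tauLevel M k) _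
    (fun s p q => a (s + M * p + q) n) (fun _ _ => rfl) (tauLevel_bijOn M k)

theorem tau_eq_prod_range_mul_prod_Icc :
    tau M a k n = (∏ ℓ ∈ Finset.range (k % (M + 1)), Gdet M a ℓ (k / (M + 1) + 1) n) *
      ∏ ℓ ∈ Finset.Icc (k % (M + 1)) M, Gdet M a ℓ (k / (M + 1)) n := by
  rw [tau_eq_prod_Gdet, Fin.prod_univ_eq_prod_range (fun ℓ => Gdet M a ℓ
      (if ℓ < k % (M + 1) then k / (M + 1) + 1 else k / (M + 1)) n),
    ← Finset.prod_range_mul_prod_Ico _ (Nat.mod_lt k (Nat.add_one_pos M)).le,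
    Finset.Ico_add_one_right_eq_Icc]
  congr 1 <;> refine Finset.prod_congr rfl fun ℓ hℓ => ?_
  · rw [if_pos (Finset.mem_range.1 hℓ)]
  · rw [if_neg (Finset.mem_Icc.1 hℓ).1.not_gt]

end Tau

theorem tau_block_diagonal_offset_general
    (M i j n : ℕ) (hiM : i ≤ M) (a : ℕ → ℕ → ℂ) :
    tau M a (i + j * (M + 1)) n =
      (∏ ℓ ∈ Finset.range i, Gdet M a ℓ (j + 1) n) *
        ∏ ℓ ∈ Finset.Icc i M, Gdet M a ℓ j n := by
  have hi : i < M + 1 := Nat.lt_succ_of_le hiM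
  have hdiv : (i + j * (M + 1)) / (M + 1) = j := by
    rw [Nat.add_mul_div_right _ _ (Nat.add_one_pos M), Nat.div_eq_of_lt hi, zero_add]
  have hmod : (i + j * (M + 1)) % (M + 1) = i := by
    rw [Nat.add_mul_mod_self_right, Nat.mod_eq_of_lt hi]
  rw [tau_eq_prod_range_mul_prod_Icc, hdiv, hmod]

theorem tau_block_diagonal_offset
    (M i j n : ℕ) (hM : 1 ≤ M) (hi1 : 1 ≤ i) (hiM : i ≤ M) (a : ℕ → ℕ → ℂ) :
    tau M a (i + j * (M + 1)) n =
      (∏ ℓ ∈ Finset.range i, Gdet M a ℓ (j + 1) n) *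
        ∏ ℓ ∈ Finset.Icc i M, Gdet M a ℓ j n :=
  tau_block_diagonal_offset_general M i j n hiM a
end

section
/- Let M ≥ 1 be an integer, and let a_k^{(n)} (k, n ≥ 0) and d^{(n)} (n ≥ 0) be complex numbers satisfying the evolution relation a_k^{(n+1)} = a_{k+M}^{(n)} − d^{(n)} a_k^{(n)} for all k ≥ 0 and n ≥ 0. Then for all integers i ≥ 0, j ≥ 0 and n ≥ 0, G_{i,j}^{(n)} = C_{i,j}^{(n)}. -/
/-- Coefficients expressing `a k (n+s)` as a combination of `a (k+M*t) n`. -/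
noncomputable def coefG (d : ℕ → ℂ) (n : ℕ) : ℕ → ℕ → ℂ
  | 0, t => if t = 0 then 1 else 0
  | s+1, 0 => - d (n+s) * coefG d n s 0
  | s+1, t+1 => coefG d n s t - d (n+s) * coefG d n s (t+1)

lemma coefG_gt (d : ℕ → ℂ) (n : ℕ) : ∀ s t, s < t → coefG d n s t = 0 := by
  intro s
  induction s with
  | zero => intro t ht; simp only [coefG, ite_eq_right_iff]; omega
  | succ s ih =>
    intro t ht
    match t, ht with
    | t+1, ht =>
      have h1 : s < t := Nat.lt_of_succ_lt_succ ht
      have h2 : s < t + 1 := h1.trans (Nat.lt_succ_self t)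
      simp [coefG, ih t h1, ih (t+1) h2]

lemma coefG_diag (d : ℕ → ℂ) (n : ℕ) : ∀ s, coefG d n s s = 1 := by
  intro s
  induction s with
  | zero => simp [coefG]
  | succ s ih => simp [coefG, ih, coefG_gt d n s (s+1) (Nat.lt_succ_self s)]

lemma expandG (M : ℕ) (a : ℕ → ℕ → ℂ) (d : ℕ → ℂ)
    (hevol : ∀ k n : ℕ, a k (n + 1) = a (k + M) n - d n * a k n) (n : ℕ) :
    ∀ s k, a k (n + s) = ∑ t ∈ Finset.range (s+1), coefG d n s t * a (k + M*t) n := by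
  intro s
  induction s with
  | zero => intro k; simp [coefG]
  | succ s ih =>
    intro k
    have h1 : a k (n + (s+1)) = a (k + M) (n + s) - d (n+s) * a k (n + s) := by
      have := hevol k (n + s); rwa [Nat.add_assoc] at this
    rw [h1, ih (k + M), ih k]
    rw [Finset.sum_range_succ' (fun t => coefG d n (s+1) t * a (k + M*t) n) (s+1)]
    have hz : coefG d n s (s+1) = 0 := coefG_gt d n s (s+1) (Nat.lt_succ_self s)
    simp only [coefG]
    have hsplit : ∀ t ∈ Finset.range (s+1),
        (coefG d n s t - d (n+s) * coefG d n s (t+1)) * a (k + M*(t+1)) n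
        = coefG d n s t * a (k + M + M*t) n
          - d (n+s) * (coefG d n s (t+1) * a (k + M*(t+1)) n) := by
      intro t _
      have hk : k + M * (t+1) = k + M + M * t := by ring
      rw [hk]; ring
    rw [Finset.sum_congr rfl hsplit, Finset.sum_sub_distrib]
    rw [Finset.sum_range_succ (fun t => d (n+s) * (coefG d n s (t+1) * a (k + M*(t+1)) n)) s]
    rw [Finset.mul_sum]
    rw [Finset.sum_range_succ' (fun t => d (n+s) * (coefG d n s t * a (k + M*t) n)) s]
    simp [hz]
    ring

/- STATEMENT 7: under the evolution a_k^{(n+1)} = a_{k+M}^{(n)} − d^{(n)} a_k^{(n)},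
one has G_{i,j}^{(n)} = C_{i,j}^{(n)}. -/
theorem Gdet_eq_casorati
    (M : ℕ) (hM : 1 ≤ M) (a : ℕ → ℕ → ℂ) (d : ℕ → ℂ)
    (hevol : ∀ k n : ℕ, a k (n + 1) = a (k + M) n - d n * a k n) :
    ∀ i j n : ℕ, Gdet M a i j n = casorati a i j n := by
  intro i j n
  set L : Matrix (Fin j) (Fin j) ℂ := Matrix.of fun s t : Fin j => coefG d n s t with hL
  set G : Matrix (Fin j) (Fin j) ℂ :=
    Matrix.of fun s ℓ : Fin j => a (i + M * (s : ℕ) + (ℓ : ℕ)) n with hG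
  have hLtri : L.BlockTriangular OrderDual.toDual := by
    intro s t hst
    exact coefG_gt d n (s : ℕ) (t : ℕ) hst
  have hLdet : L.det = 1 := by
    rw [Matrix.det_of_lowerTriangular L hLtri]
    simp [hL, coefG_diag]
  have hmul : (Matrix.of fun s ℓ : Fin j => a (i + (ℓ : ℕ)) (n + (s : ℕ))) = L * G := by
    ext s ℓ
    simp only [Matrix.mul_apply, hL, hG, Matrix.of_apply]
    rw [expandG M a d hevol n s (i + ℓ)]
    rw [Finset.sum_subset (Finset.range_subset_range.mpr (Nat.succ_le_of_lt s.isLt))]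
    · rw [Finset.sum_range fun t => coefG d n s t * a (i + ℓ + M * t) n]
      apply Finset.sum_congr rfl
      intro t _
      congr 2
      ring
    · intro t _ ht
      have : (s : ℕ) < t := by
        simpa using (Finset.mem_range.not.mp ht)
      rw [coefG_gt d n s t this, zero_mul]
  unfold Gdet casorati
  rw [hmul, Matrix.det_mul, hLdet, one_mul]
end

section
/- Let M ≥ 1 and m ≥ 1 be integers, and let a_k^{(n)} (k, n ≥ 0) and δ^{(n)} (n ≥ 0) be complex numbers satisfying a_k^{(n+1)} = a_{k+M}^{(n)} − (δ^{(n)})^{M+1} a_k^{(n)} for all k ≥ 0 and n ≥ 0. For k = M, M+1, …, (M+1)m−1 and n ≥ 0 define v_k^{(n)} := τ_{k+1}^{(n)} τ_{k−M}^{(n)} / (τ_k^{(n)} τ_{k−M+1}^{(n)}), assuming all τ's appearing in denominators are nonzero, and assume likewise that all Casorati determinants appearing in the denominators below are nonzero. Then for i = 0, 1, …, M−1 and j = 1, 2, …, m−1: v_{i+j(M+1)}^{(n)} = C_{i,j+1}^{(n)} C_{i+1,j−1}^{(n)} / (C_{i,j}^{(n)} C_{i+1,j}^{(n)}); and for j =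 0, 1, …, m−1: v_{M+j(M+1)}^{(n)} = C_{M,j+1}^{(n)} C_{0,j}^{(n)} / (C_{M,j}^{(n)} C_{0,j+1}^{(n)}). -/
noncomputable def cf (M : ℕ) (δ : ℕ → ℂ) (n : ℕ) : ℕ → ℕ → ℂ
  | 0, 0 => 1
  | 0, _+1 => 0
  | s+1, 0 => - (δ (n+s))^(M+1) * cf M δ n s 0
  | s+1, t+1 => cf M δ n s t - (δ (n+s))^(M+1) * cf M δ n s (t+1)

lemma cf_gt (M : ℕ) (δ : ℕ → ℂ) (n : ℕ) : ∀ s t, s < t → cf M δ n s t = 0 := by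
  intro s
  induction s with
  | zero =>
    intro t ht
    match t, ht with
    | t+1, _ => rfl
  | succ s ih =>
    intro t ht
    match t, ht with
    | t+1, ht =>
      show cf M δ n s t - _ * cf M δ n s (t+1) = 0
      rw [ih t (by omega), ih (t+1) (by omega)]; ring

lemma cf_diag (M : ℕ) (δ : ℕ → ℂ) (n : ℕ) : ∀ s, cf M δ n s s = 1 := by
  intro s
  induction s with
  | zero => rfl
  | succ s ih =>
    show cf M δ n s s - _ * cf M δ n s (s+1) = 1
    rw [ih, cf_gt M δ n s (s+1) (by omega)]; ring

lemma a_expand (M : ℕ) (a : ℕ → ℕ → ℂ) (δ : ℕ → ℂ)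
    (hevol : ∀ k n : ℕ, a k (n + 1) = a (k + M) n - (δ n) ^ (M + 1) * a k n) (n : ℕ) :
    ∀ s k, a k (n + s) = ∑ t ∈ Finset.range (s+1), cf M δ n s t * a (k + M*t) n := by
  intro s
  induction s with
  | zero => intro k; simp [cf]
  | succ s ih =>
    intro k
    have h1 : a k (n + (s+1)) = a (k+M) (n+s) - (δ (n+s))^(M+1) * a k (n+s) := by
      have : n + (s+1) = (n+s) + 1 := by omega
      rw [this, hevol]
    rw [h1, ih, ih]
    have h2 : ∑ t ∈ Finset.range (s+1+1), cf M δ n (s+1) t * a (k + M*t) n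
        = (∑ t ∈ Finset.range (s+1), cf M δ n (s+1) (t+1) * a (k + M*(t+1)) n)
          + cf M δ n (s+1) 0 * a (k + M*0) n :=
      Finset.sum_range_succ' _ (s+1)
    rw [h2]
    have h3 : ∑ t ∈ Finset.range (s+1), cf M δ n s t * a (k + M + M*t) n
        = ∑ t ∈ Finset.range (s+1), cf M δ n s t * a (k + M*(t+1)) n := by
      apply Finset.sum_congr rfl
      intro t _
      congr 2
      ring
    have h4 : ∑ t ∈ Finset.range (s+1), cf M δ n s t * a (k + M*t) n
        = (∑ t ∈ Finset.range s, cf M δ n s (t+1) * a (k + M*(t+1)) n)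
          + cf M δ n s 0 * a (k + M*0) n :=
      Finset.sum_range_succ' _ s
    have h5 : ∑ t ∈ Finset.range (s+1), cf M δ n s (t+1) * a (k + M*(t+1)) n
        = ∑ t ∈ Finset.range s, cf M δ n s (t+1) * a (k + M*(t+1)) n := by
      rw [Finset.sum_range_succ, cf_gt M δ n s (s+1) (by omega)]
      ring
    rw [h3, h4, ← h5]
    have h6 : ∀ t, cf M δ n (s+1) (t+1) * a (k + M*(t+1)) n
        = cf M δ n s t * a (k + M*(t+1)) n
          - (δ (n+s))^(M+1) * (cf M δ n s (t+1) * a (k + M*(t+1)) n) := by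
      intro t
      show (cf M δ n s t - (δ (n+s))^(M+1) * cf M δ n s (t+1)) * _ = _
      ring
    rw [Finset.sum_congr rfl (fun t _ => h6 t), Finset.sum_sub_distrib,
        ← Finset.mul_sum]
    have h7 : cf M δ n (s+1) 0 = - (δ (n+s))^(M+1) * cf M δ n s 0 := rfl
    rw [h7]
    ring

lemma casorati_eq_Gdet (M : ℕ) (a : ℕ → ℕ → ℂ) (δ : ℕ → ℂ)
    (hevol : ∀ k n : ℕ, a k (n + 1) = a (k + M) n - (δ n) ^ (M + 1) * a k n)
    (k j n : ℕ) : casorati a k j n = Gdet M a k j n := by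
  unfold casorati Gdet
  set L : Matrix (Fin j) (Fin j) ℂ :=
    Matrix.of fun s t : Fin j => if (t : ℕ) ≤ (s : ℕ) then cf M δ n s t else 0 with hL
  have hmat : (Matrix.of fun s ℓ : Fin j => a (k + (ℓ : ℕ)) (n + (s : ℕ)))
      = L * (Matrix.of fun s ℓ : Fin j => a (k + M * (s : ℕ) + (ℓ : ℕ)) n) := by
    ext s ℓ
    rw [Matrix.mul_apply]
    show a (k + (ℓ : ℕ)) (n + (s : ℕ)) = ∑ t : Fin j,
      (if (t : ℕ) ≤ (s : ℕ) then cf M δ n s t else 0) * a (k + M * (t : ℕ) + (ℓ : ℕ)) n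
    rw [a_expand M a δ hevol n s (k + ℓ)]
    rw [Fin.sum_univ_eq_sum_range
      (fun t => (if t ≤ (s : ℕ) then cf M δ n s t else 0) * a (k + M * t + (ℓ : ℕ)) n) j]
    rw [← Finset.sum_subset (Finset.range_subset_range.2 (by omega : (s:ℕ)+1 ≤ j))
      (fun t _ ht => by
        rw [if_neg (by simp [Finset.mem_range] at ht ⊢; omega)]
        ring)]
    apply Finset.sum_congr rfl
    intro t ht
    rw [if_pos (by simp [Finset.mem_range] at ht; omega)]
    congr 2
    ring
  rw [hmat, Matrix.det_mul]
  have hLdet : L.det = 1 := by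
    rw [Matrix.det_of_lowerTriangular L (by
      intro p q hpq
      have hpq' : (p : ℕ) < (q : ℕ) := hpq
      show (if (q : ℕ) ≤ (p : ℕ) then _ else 0) = 0
      rw [if_neg (by omega)])]
    have : ∀ p : Fin j, L p p = 1 := by
      intro p
      show (if (p : ℕ) ≤ (p : ℕ) then cf M δ n p p else 0) = 1
      rw [if_pos le_rfl, cf_diag]
    simp [this]
  rw [hLdet, one_mul]

lemma det_blockDiagonal'_fin {N : ℕ} (b : Fin N → ℕ)
    (B : ∀ s, Matrix (Fin (b s)) (Fin (b s)) ℂ) :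
    (Matrix.blockDiagonal' B).det = ∏ s, (B s).det := by
  rw [(Matrix.blockTriangular_blockDiagonal' B).det_fintype]
  apply Finset.prod_congr rfl
  intro s _
  let e2 : Fin (b s) ≃ {ik : Σ u : Fin N, Fin (b u) // ik.fst = s} :=
    { toFun := fun q => ⟨⟨s, q⟩, rfl⟩
      invFun := fun x => x.2 ▸ x.1.2
      left_inv := fun q => rfl
      right_inv := by rintro ⟨⟨u, p⟩, h⟩; dsimp only at h; subst h; rfl }
  rw [← Matrix.det_submatrix_equiv_self e2
    ((Matrix.blockDiagonal' B).toSquareBlock Sigma.fst s)]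
  congr 1
  ext p q
  show Matrix.blockDiagonal' B ⟨s, p⟩ ⟨s, q⟩ = B s p q
  exact Matrix.blockDiagonal'_apply_eq B s p q

lemma sigma_fin_mk_eq {N : ℕ} {b : Fin N → ℕ} {s t : Fin N} (h : s = t)
    {p : Fin (b s)} {q : Fin (b t)} (hpq : (p : ℕ) = (q : ℕ)) :
    (⟨s, p⟩ : Σ u : Fin N, Fin (b u)) = ⟨t, q⟩ := by
  subst h
  exact congrArg _ (Fin.ext hpq)

lemma blockD_apply_val {N : ℕ} {b : Fin N → ℕ}
    (B : ∀ s, Matrix (Fin (b s)) (Fin (b s)) ℂ) {s t : Fin N}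
    (p : Fin (b s)) (q : Fin (b t)) (h : t = s) (hq : (q : ℕ) < b s) :
    Matrix.blockDiagonal' B ⟨s, p⟩ ⟨t, q⟩ = B s p ⟨(q : ℕ), hq⟩ := by
  subst h
  have : (⟨(q : ℕ), hq⟩ : Fin (b t)) = q := Fin.ext rfl
  rw [this]
  exact Matrix.blockDiagonal'_apply_eq B t p q

lemma blockD_apply_vne {N : ℕ} {b : Fin N → ℕ}
    (B : ∀ s, Matrix (Fin (b s)) (Fin (b s)) ℂ) {s t : Fin N}
    (p : Fin (b s)) (q : Fin (b t)) (h : ¬ (s : ℕ) = (t : ℕ)) :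
    Matrix.blockDiagonal' B ⟨s, p⟩ ⟨t, q⟩ = 0 :=
  Matrix.blockDiagonal'_apply_ne _ _ _ (fun hc => h (congrArg Fin.val hc))

lemma tau_block (M : ℕ) (a : ℕ → ℕ → ℂ) (n k : ℕ) :
    tau M a k n = ∏ s : Fin (M+1),
      Gdet M a (s : ℕ) (if (s : ℕ) < k % (M+1) then k/(M+1)+1 else k/(M+1)) n := by
  unfold tau
  set j := k / (M + 1) with hj
  set i := k % (M + 1) with hi
  have hiM : i < M + 1 := Nat.mod_lt _ (by omega)
  set b : Fin (M+1) → ℕ := fun s => if (s : ℕ) < i then j+1 else j with hb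
  have hbj : ∀ s, j ≤ b s := by intro s; dsimp [b]; split <;> omega
  have hbj' : ∀ s, b s ≤ j + 1 := by intro s; dsimp [b]; split <;> omega
  set B : ∀ s : Fin (M+1), Matrix (Fin (b s)) (Fin (b s)) ℂ :=
    fun s => Matrix.of fun p q => a ((s : ℕ) + M * (p : ℕ) + (q : ℕ)) n with hB
  set e : (Σ s : Fin (M+1), Fin (b s)) ≃ ((Fin j × Fin (M+1)) ⊕ Fin i) := {
    toFun := fun x =>
      if h : (x.2 : ℕ) < j then Sum.inl (⟨x.2, h⟩, x.1)
      else Sum.inr ⟨(x.1 : ℕ), by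
        have h2 : (x.2 : ℕ) < b x.1 := x.2.isLt
        dsimp [b] at h2; split at h2 <;> omega⟩
    invFun := fun y => match y with
      | Sum.inl (p, s) => ⟨s, ⟨(p : ℕ), lt_of_lt_of_le p.isLt (hbj s)⟩⟩
      | Sum.inr t => ⟨⟨(t : ℕ), by omega⟩, ⟨j, by
          show j < if ((t : ℕ) : ℕ) < i then j+1 else j
          rw [if_pos t.isLt]; omega⟩⟩
    left_inv := by
      rintro ⟨s, q⟩
      dsimp only
      split_ifs with h
      · rfl
      all_goals
        have hq : (q : ℕ) = j := by
          have h2 : (q : ℕ) < b s := q.isLt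
          dsimp [b] at h2; split at h2 <;> omega
        exact sigma_fin_mk_eq (b := b) (Fin.ext rfl) hq.symm
    right_inv := by
      rintro (⟨p, s⟩ | t)
      · dsimp only
        rw [dif_pos p.isLt]
      · dsimp only
        rw [dif_neg (lt_irrefl j)]
  } with he
  have hprod : (∏ s : Fin (M+1), Gdet M a (s : ℕ) (if (s : ℕ) < i then j+1 else j) n)
      = (Matrix.blockDiagonal' B).det := by
    rw [det_blockDiagonal'_fin]
    exact Finset.prod_congr rfl (fun s _ => rfl)
  rw [hprod, ← Matrix.det_submatrix_equiv_self e]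
  refine congrArg Matrix.det ?_
  ext ⟨s, p⟩ ⟨t, q⟩
  rw [Matrix.submatrix_apply, he]
  simp only [Equiv.coe_fn_mk]
  by_cases hp : (p : ℕ) < j <;> by_cases hq : (q : ℕ) < j
  · rw [dif_pos hp, dif_pos hq]
    by_cases hst : (s : ℕ) = (t : ℕ)
    · rw [blockD_apply_val B p q (Fin.ext hst.symm)
        (by have h2 : (q : ℕ) < b t := q.isLt
            dsimp [b] at h2 ⊢
            by_cases hsi : (s : ℕ) < i
            · rw [if_pos hsi]; split at h2 <;> omega
            · rw [if_neg hsi]; split at h2 <;> omega)]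
      show (if (s : ℕ) = (t : ℕ) then a ((p : ℕ) * M + (q : ℕ) + (s : ℕ)) n else 0) = _
      rw [if_pos hst]
      show a _ n = a _ n
      congr 1
      ring
    · rw [blockD_apply_vne B p q hst]
      show (if (s : ℕ) = (t : ℕ) then a ((p : ℕ) * M + (q : ℕ) + (s : ℕ)) n else 0) = 0
      rw [if_neg hst]
  · rw [dif_pos hp, dif_neg hq]
    have hqj : (q : ℕ) = j := by
      have h2 : (q : ℕ) < b t := q.isLt
      dsimp [b] at h2; split at h2 <;> omega
    by_cases hst : (s : ℕ) = (t : ℕ)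
    · rw [blockD_apply_val B p q (Fin.ext hst.symm)
        (by have h2 : (q : ℕ) < b t := q.isLt
            dsimp [b] at h2 ⊢
            by_cases hsi : (s : ℕ) < i
            · rw [if_pos hsi]; split at h2 <;> omega
            · rw [if_neg hsi]; split at h2 <;> omega)]
      show (if (s : ℕ) = (t : ℕ) then a ((p : ℕ) * M + j + (s : ℕ)) n else 0) = _
      rw [if_pos hst]
      show a _ n = a _ n
      rw [hqj]
      congr 1
      ring
    · rw [blockD_apply_vne B p q hst]
      show (if (s : ℕ) = (t : ℕ) then a ((p : ℕ) * M + j + (s : ℕ)) n else 0) = 0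
      rw [if_neg hst]
  · rw [dif_neg hp, dif_pos hq]
    have hpj : (p : ℕ) = j := by
      have h2 : (p : ℕ) < b s := p.isLt
      dsimp [b] at h2; split at h2 <;> omega
    by_cases hst : (s : ℕ) = (t : ℕ)
    · rw [blockD_apply_val B p q (Fin.ext hst.symm)
        (by have h2 : (q : ℕ) < b t := q.isLt
            dsimp [b] at h2 ⊢
            by_cases hsi : (s : ℕ) < i
            · rw [if_pos hsi]; split at h2 <;> omega
            · rw [if_neg hsi]; split at h2 <;> omega)]
      show (if (s : ℕ) = (t : ℕ) then a (j * M + (q : ℕ) + (s : ℕ)) n else 0) = _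
      rw [if_pos hst]
      show a _ n = a _ n
      congr 1
      show j * M + (q : ℕ) + (s : ℕ) = (s : ℕ) + M * (p : ℕ) + (q : ℕ)
      rw [hpj]; ring
    · rw [blockD_apply_vne B p q hst]
      show (if (s : ℕ) = (t : ℕ) then a (j * M + (q : ℕ) + (s : ℕ)) n else 0) = 0
      rw [if_neg hst]
  · rw [dif_neg hp, dif_neg hq]
    have hpj : (p : ℕ) = j := by
      have h2 : (p : ℕ) < b s := p.isLt
      dsimp [b] at h2; split at h2 <;> omega
    have hqj : (q : ℕ) = j := by
      have h2 : (q : ℕ) < b t := q.isLt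
      dsimp [b] at h2; split at h2 <;> omega
    by_cases hst : (s : ℕ) = (t : ℕ)
    · rw [blockD_apply_val B p q (Fin.ext hst.symm)
        (by have h2 : (q : ℕ) < b t := q.isLt
            dsimp [b] at h2 ⊢
            by_cases hsi : (s : ℕ) < i
            · rw [if_pos hsi]; split at h2 <;> omega
            · rw [if_neg hsi]; split at h2 <;> omega)]
      show (if (s : ℕ) = (t : ℕ) then a (j * (M + 1) + (s : ℕ)) n else 0) = _
      rw [if_pos hst]
      show a _ n = a _ n
      congr 1
      show j * (M + 1) + (s : ℕ) = (s : ℕ) + M * (p : ℕ) + (q : ℕ)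
      rw [hpj, hqj]; ring
    · rw [blockD_apply_vne B p q hst]
      show (if (s : ℕ) = (t : ℕ) then a (j * (M + 1) + (s : ℕ)) n else 0) = 0
      rw [if_neg hst]

lemma tau_val' (M : ℕ) (a : ℕ → ℕ → ℂ) (n i j : ℕ) (hi : i ≤ M + 1) :
    tau M a (i + j * (M+1)) n
      = ∏ s : Fin (M+1), Gdet M a (s : ℕ) (if (s : ℕ) < i then j+1 else j) n := by
  rcases Nat.lt_or_ge i (M+1) with h | h
  · have hmod : (i + j*(M+1)) % (M+1) = i := by
      rw [Nat.add_mul_mod_self_right]; exact Nat.mod_eq_of_lt h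
    have hdiv : (i + j*(M+1)) / (M+1) = j := by
      rw [Nat.add_mul_div_right _ _ (by omega : 0 < M+1), Nat.div_eq_of_lt h, Nat.zero_add]
    rw [tau_block, hmod, hdiv]
  · have hie : i = M + 1 := by omega
    subst hie
    have harg : (M+1) + j*(M+1) = 0 + (j+1)*(M+1) := by ring
    rw [harg]
    have hmod : (0 + (j+1)*(M+1)) % (M+1) = 0 := by
      rw [Nat.add_mul_mod_self_right, Nat.zero_mod]
    have hdiv : (0 + (j+1)*(M+1)) / (M+1) = j+1 := by
      rw [Nat.add_mul_div_right _ _ (by omega : 0 < M+1), Nat.zero_div, Nat.zero_add]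
    rw [tau_block, hmod, hdiv]
    apply Finset.prod_congr rfl
    intro s _
    rw [if_neg (Nat.not_lt_zero _), if_pos s.isLt]

lemma prod_step (M : ℕ) (a : ℕ → ℕ → ℂ) (n i0 j1 j2 : ℕ) (hi0 : i0 < M+1) :
    (∏ s : Fin (M+1), Gdet M a (s : ℕ) (if (s : ℕ) < i0 + 1 then j1 else j2) n)
        * Gdet M a i0 j2 n
      = (∏ s : Fin (M+1), Gdet M a (s : ℕ) (if (s : ℕ) < i0 then j1 else j2) n)
        * Gdet M a i0 j1 n := by
  have key : ∀ s : Fin (M+1), s ∈ Finset.univ.erase (⟨i0, hi0⟩ : Fin (M+1)) →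
      Gdet M a (s : ℕ) (if (s : ℕ) < i0 + 1 then j1 else j2) n
        = Gdet M a (s : ℕ) (if (s : ℕ) < i0 then j1 else j2) n := by
    intro s hs
    have hne : (s : ℕ) ≠ i0 := fun hc => (Finset.ne_of_mem_erase hs) (Fin.ext hc)
    by_cases hlt : (s : ℕ) < i0
    · rw [if_pos hlt, if_pos (by omega)]
    · rw [if_neg hlt, if_neg (by omega)]
  rw [← Finset.mul_prod_erase Finset.univ _ (Finset.mem_univ (⟨i0, hi0⟩ : Fin (M+1))),
      ← Finset.mul_prod_erase Finset.univ
        (fun s : Fin (M+1) => Gdet M a (s : ℕ) (if (s : ℕ) < i0 then j1 else j2) n)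
        (Finset.mem_univ (⟨i0, hi0⟩ : Fin (M+1))),
      Finset.prod_congr rfl key]
  rw [if_pos (show ((⟨i0, hi0⟩ : Fin (M+1)) : ℕ) < i0 + 1 from Nat.lt_succ_self i0),
      if_neg (show ¬ ((⟨i0, hi0⟩ : Fin (M+1)) : ℕ) < i0 from Nat.lt_irrefl i0)]
  ring

/- STATEMENT 8: representation of the auxiliary dhLV variable
v_k^{(n)} = τ_{k+1}^{(n)} τ_{k−M}^{(n)} / (τ_k^{(n)} τ_{k−M+1}^{(n)})
in terms of Casorati determinants, for k = i + j(M+1). -/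
theorem dhLV_auxiliary_casorati
    (M m : ℕ) (hM : 1 ≤ M) (hm : 1 ≤ m)
    (a : ℕ → ℕ → ℂ) (δ : ℕ → ℂ)
    (hevol : ∀ k n : ℕ, a k (n + 1) = a (k + M) n - (δ n) ^ (M + 1) * a k n)
    (n : ℕ)
    (hτ : ∀ k, M ≤ k → k ≤ (M + 1) * m - 1 →
      tau M a k n ≠ 0 ∧ tau M a (k - M + 1) n ≠ 0)
    (hC1 : ∀ i < M, ∀ j, 1 ≤ j → j ≤ m - 1 →
      casorati a i j n ≠ 0 ∧ casorati a (i + 1) j n ≠ 0)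
    (hC2 : ∀ j ≤ m - 1, casorati a M j n ≠ 0 ∧ casorati a 0 (j + 1) n ≠ 0) :
    (∀ i < M, ∀ j, 1 ≤ j → j ≤ m - 1 →
      tau M a (i + j * (M + 1) + 1) n * tau M a (i + j * (M + 1) - M) n /
          (tau M a (i + j * (M + 1)) n * tau M a (i + j * (M + 1) - M + 1) n) =
        casorati a i (j + 1) n * casorati a (i + 1) (j - 1) n /
          (casorati a i j n * casorati a (i + 1) j n)) ∧
    (∀ j ≤ m - 1,
      tau M a (M + j * (M + 1) + 1) n * tau M a (M + j * (M + 1) - M) n /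
          (tau M a (M + j * (M + 1)) n * tau M a (M + j * (M + 1) - M + 1) n) =
        casorati a M (j + 1) n * casorati a 0 j n /
          (casorati a M j n * casorati a 0 (j + 1) n)) := by
  obtain ⟨m', rfl⟩ : ∃ m', m = m' + 1 := ⟨m - 1, by omega⟩
  constructor
  · intro i hilt j hj1 hj2
    obtain ⟨j', rfl⟩ : ∃ j', j = j' + 1 := ⟨j - 1, by omega⟩
    have hk1 : M ≤ i + (j' + 1) * (M + 1) := by
      have h1 : M + 1 ≤ (j' + 1) * (M + 1) := Nat.le_mul_of_pos_left (M+1) (by omega)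
      omega
    have hk2 : i + (j' + 1) * (M + 1) ≤ (M + 1) * (m' + 1) - 1 := by
      have h1 : (j' + 1) * (M + 1) ≤ m' * (M + 1) :=
        Nat.mul_le_mul_right _ (by omega)
      have h2 : (M + 1) * (m' + 1) = m' * (M + 1) + (M + 1) := by ring
      omega
    obtain ⟨hne2, hne4⟩ := hτ _ hk1 hk2
    have hCC := hC1 i hilt (j' + 1) (by omega) (by omega)
    have e1 : i + (j' + 1) * (M + 1) + 1 = (i + 1) + (j' + 1) * (M + 1) := by ring
    have e3 : i + (j' + 1) * (M + 1) - M = (i + 1) + j' * (M + 1) := by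
      rw [show i + (j' + 1) * (M + 1) = ((i + 1) + j' * (M + 1)) + M from by ring]
      omega
    have e4 : i + (j' + 1) * (M + 1) - M + 1 = (i + 1 + 1) + j' * (M + 1) := by
      rw [e3]; omega
    have T1 : tau M a (i + (j' + 1) * (M + 1) + 1) n
        = ∏ s : Fin (M+1), Gdet M a (s : ℕ)
            (if (s : ℕ) < i + 1 then j' + 1 + 1 else j' + 1) n := by
      rw [e1]; exact tau_val' M a n (i+1) (j'+1) (by omega)
    have T2 : tau M a (i + (j' + 1) * (M + 1)) n
        = ∏ s : Fin (M+1), Gdet M a (s : ℕ)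
            (if (s : ℕ) < i then j' + 1 + 1 else j' + 1) n :=
      tau_val' M a n i (j'+1) (by omega)
    have T3 : tau M a (i + (j' + 1) * (M + 1) - M) n
        = ∏ s : Fin (M+1), Gdet M a (s : ℕ)
            (if (s : ℕ) < i + 1 then j' + 1 else j') n := by
      rw [e3]; exact tau_val' M a n (i+1) j' (by omega)
    have T4 : tau M a (i + (j' + 1) * (M + 1) - M + 1) n
        = ∏ s : Fin (M+1), Gdet M a (s : ℕ)
            (if (s : ℕ) < i + 1 + 1 then j' + 1 else j') n := by
      rw [e4]; exact tau_val' M a n (i+1+1) j' (by omega)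
    rw [T2] at hne2
    rw [T4] at hne4
    have hG3 : Gdet M a i (j' + 1) n ≠ 0 := by
      rw [← casorati_eq_Gdet M a δ hevol]; exact hCC.1
    have hG4 : Gdet M a (i + 1) (j' + 1) n ≠ 0 := by
      rw [← casorati_eq_Gdet M a δ hevol]; exact hCC.2
    rw [T1, T2, T3, T4, Nat.add_sub_cancel,
        casorati_eq_Gdet M a δ hevol i (j' + 1 + 1) n,
        casorati_eq_Gdet M a δ hevol (i + 1) j' n,
        casorati_eq_Gdet M a δ hevol i (j' + 1) n,
        casorati_eq_Gdet M a δ hevol (i + 1) (j' + 1) n,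
        div_eq_div_iff (mul_ne_zero hne2 hne4) (mul_ne_zero hG3 hG4)]
    have E1 := prod_step M a n i (j' + 1 + 1) (j' + 1) (by omega)
    have E2 := prod_step M a n (i + 1) (j' + 1) j' (by omega)
    linear_combination
      ((∏ s : Fin (M+1), Gdet M a (s : ℕ)
          (if (s : ℕ) < i + 1 then j' + 1 else j') n)
        * Gdet M a (i + 1) (j' + 1) n) * E1
      - ((∏ s : Fin (M+1), Gdet M a (s : ℕ)
          (if (s : ℕ) < i then j' + 1 + 1 else j' + 1) n)
        * Gdet M a i (j' + 1 + 1) n) * E2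
  · intro j hj
    have hk1 : M ≤ M + j * (M + 1) := Nat.le_add_right _ _
    have hk2 : M + j * (M + 1) ≤ (M + 1) * (m' + 1) - 1 := by
      have h1 : j * (M + 1) ≤ m' * (M + 1) := Nat.mul_le_mul_right _ (by omega)
      have h2 : (M + 1) * (m' + 1) = m' * (M + 1) + (M + 1) := by ring
      omega
    obtain ⟨hne2, hne4⟩ := hτ _ hk1 hk2
    have hCC := hC2 j hj
    have e1 : M + j * (M + 1) + 1 = (M + 1) + j * (M + 1) := by ring
    have e3 : M + j * (M + 1) - M = 0 + j * (M + 1) := by omega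
    have e4 : M + j * (M + 1) - M + 1 = 1 + j * (M + 1) := by omega
    have T1 : tau M a (M + j * (M + 1) + 1) n
        = ∏ s : Fin (M+1), Gdet M a (s : ℕ)
            (if (s : ℕ) < M + 1 then j + 1 else j) n := by
      rw [e1]; exact tau_val' M a n (M+1) j (le_refl _)
    have T2 : tau M a (M + j * (M + 1)) n
        = ∏ s : Fin (M+1), Gdet M a (s : ℕ)
            (if (s : ℕ) < M then j + 1 else j) n :=
      tau_val' M a n M j (by omega)
    have T3 : tau M a (M + j * (M + 1) - M) n
        = ∏ s : Fin (M+1), Gdet M a (s : ℕ)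
            (if (s : ℕ) < 0 then j + 1 else j) n := by
      rw [e3]; exact tau_val' M a n 0 j (by omega)
    have T4 : tau M a (M + j * (M + 1) - M + 1) n
        = ∏ s : Fin (M+1), Gdet M a (s : ℕ)
            (if (s : ℕ) < 1 then j + 1 else j) n := by
      rw [e4]; exact tau_val' M a n 1 j (by omega)
    rw [T2] at hne2
    rw [T4] at hne4
    have hG2 : Gdet M a M j n ≠ 0 := by
      rw [← casorati_eq_Gdet M a δ hevol]; exact hCC.1
    have hG4 : Gdet M a 0 (j + 1) n ≠ 0 := by
      rw [← casorati_eq_Gdet M a δ hevol]; exact hCC.2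
    rw [T1, T2, T3, T4,
        casorati_eq_Gdet M a δ hevol M (j + 1) n,
        casorati_eq_Gdet M a δ hevol 0 j n,
        casorati_eq_Gdet M a δ hevol M j n,
        casorati_eq_Gdet M a δ hevol 0 (j + 1) n,
        div_eq_div_iff (mul_ne_zero hne2 hne4) (mul_ne_zero hG2 hG4)]
    have E1 := prod_step M a n M (j + 1) j (by omega)
    have E2 := prod_step M a n 0 (j + 1) j (by omega)
    simp only [Nat.zero_add] at E2
    linear_combination
      ((∏ s : Fin (M+1), Gdet M a (s : ℕ)
          (if (s : ℕ) < 0 then j + 1 else j) n)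
        * Gdet M a 0 (j + 1) n) * E1
      - ((∏ s : Fin (M+1), Gdet M a (s : ℕ)
          (if (s : ℕ) < M then j + 1 else j) n)
        * Gdet M a M (j + 1) n) * E2
end

section
/- Let M ≥ 1 and m ≥ 2 be integers and let a_k^{(n)} (k, n ≥ 0) be complex numbers. Suppose there are nonzero complex numbers r_1, …, r_m with |r_1| > |r_2| > … > |r_m| such that for every k ≥ 0 there are nonzero complex constants c_{1,k}, …, c_{m,k}, reals ρ_k with 0 < ρ_k < |r_m| and μ_k > 0, and a sequence (b_k^{(n)})_{n≥0} with |b_k^{(n)}| ≤ μ_k ρ_k^n, satisfying a_k^{(n)} = Σ_{ℓ=1}^{m} c_{ℓ,k} r_ℓ^{n+k+1} + b_k^{(n)} for all n ≥ 0. For integers k ≥ 0 and 1 ≤ j ≤ m define the leading constant c_{k,j} := Σ_{κ ∈ {1,…,j}^j} det M_κ, where M_κ is the j×j matrix whose (s, ℓ) entry (s = 0, …, j−1; ℓ = 1, …, j) is c_{κ_ℓ, k+ℓ−1} r_{κ_ℓ}^{k+ℓ+s}, and set c_{k,0} := 1. Assume c_{k,j} ≠ 0 for all 0 ≤ k ≤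 M and 0 ≤ j ≤ m. Then: (i) for every i = 0, 1, …, M−1 and j = 1, 2, …, m−1, the quantity v_{i+j(M+1)}^{(n)} := C_{i,j+1}^{(n)} C_{i+1,j−1}^{(n)} / (C_{i,j}^{(n)} C_{i+1,j}^{(n)}) is defined for all sufficiently large n and converges to 0 as n → ∞; and (ii) for every j = 0, 1, …, m−1, the quantity v_{M+j(M+1)}^{(n)} := C_{M,j+1}^{(n)} C_{0,j}^{(n)} / (C_{M,j}^{(n)} C_{0,j+1}^{(n)}) is defined for all sufficiently large n and converges to the constant ĉ_j := c_{M,j+1} c_{0,j} / (c_{M,j} c_{0,j+1}) as n → ∞. -/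
/-- The leading constant `c_{k,j} = Σ_{κ ∈ {1,…,j}^j} det M_κ`, where the `(s,ℓ)`
entry of `M_κ` is `c_{κ_ℓ, k+ℓ-1} r_{κ_ℓ}^{k+ℓ+s}` (here 0-based in `ℓ`, `s`);
`c_{k,0} = 1`. -/
noncomputable def leadConst (m : ℕ) (r : Fin m → ℂ) (c : ℕ → Fin m → ℂ)
    (k j : ℕ) (h : j ≤ m) : ℂ :=
  ∑ κ : Fin j → Fin j,
    Matrix.det (Matrix.of fun s ℓ : Fin j =>
      c (k + (ℓ : ℕ)) (Fin.castLE h (κ ℓ)) *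
        r (Fin.castLE h (κ ℓ)) ^ (k + (ℓ : ℕ) + 1 + (s : ℕ)))

/-!
Write `a_{k+ℓ}^{(n+s)} = ∑_t r_t^s r_t^n L_{tℓ} + b_{k+ℓ}^{(n+s)}` with `L_{tℓ} = c_{t,k+ℓ} r_t^{k+ℓ+1}`,
so the Casorati matrix is `P · diag(r_t^n) · L + B_n` with `P_{st} = r_t^s`. Let `V` be the
Vandermonde matrix of the `j` dominant roots. Multiplying by `diag(r_i^{-n}) V⁻¹` on the left turns
the first `j` columns of `P` into the identity, while every other contribution decays because
`|r_t| < |r_i|` for `t > i` and `ρ_k < |r_i|`. So the rescaled matrix tends to the first `j` rows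
`L_j` of `L`, and by continuity of the determinant `C_{k,j}^{(n)} / (r_1 ⋯ r_j)^n → det V · det L_j`,
which is `c_{k,j}` after expanding `det (V L_j)` column by column.

Each `v^{(n)}` is then a quotient of four such determinants: the powers of the `r`-products cancel
in (ii), and leave a factor `(r_{j+1} / r_j)^n → 0` in (i).
-/

open Finset Filter Matrix Topology

namespace Matrix

variable {K ι : Type*} [Field K] [Fintype ι] [DecidableEq ι]

theorem det_mul_eq_sum_det (M N : Matrix ι ι K) :
    (M * N).det = ∑ p : ι → ι, (of fun s ℓ => M s (p ℓ) * N (p ℓ) ℓ).det := by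
  simp only [det_apply', mul_apply, prod_univ_sum, mul_sum, Fintype.piFinset_univ, of_apply]
  rw [Finset.sum_comm]

variable [TopologicalSpace K] [IsTopologicalRing K]

theorem tendsto_det_div_prod_pow {V Q : Matrix ι ι K} (hV : IsUnit V.det) {d : ι → K}
    (hd : ∀ i, d i ≠ 0) {X : ℕ → Matrix ι ι K}
    (hX : Tendsto (fun n => diagonal (fun i => (d i ^ n)⁻¹) * V⁻¹ * X n) atTop (𝓝 Q)) :
    Tendsto (fun n => (X n).det / (∏ i, d i) ^ n) atTop (𝓝 (V.det * Q.det)) := by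
  have hfactor : ∀ n, X n =
      V * diagonal (fun i => d i ^ n) * (diagonal (fun i => (d i ^ n)⁻¹) * V⁻¹ * X n) := by
    intro n
    have hdiag : diagonal (fun i => d i ^ n) * diagonal (fun i => (d i ^ n)⁻¹) = 1 := by
      rw [diagonal_mul_diagonal, ← diagonal_one]
      exact congrArg diagonal (funext fun i => mul_inv_cancel₀ (pow_ne_zero n (hd i)))
    rw [← mul_assoc, ← mul_assoc, mul_assoc V, hdiag, mul_one, mul_nonsing_inv _ hV, one_mul]
  have hdet : ∀ n, (X n).det / (∏ i, d i) ^ n =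
      V.det * (diagonal (fun i => (d i ^ n)⁻¹) * V⁻¹ * X n).det := by
    intro n
    conv_lhs => rw [hfactor n]
    rw [det_mul, det_mul, det_diagonal, prod_pow, mul_right_comm,
      mul_div_cancel_right₀ _ (pow_ne_zero n (prod_ne_zero_iff.mpr fun i _ => hd i))]
  simp_rw [hdet]
  exact tendsto_const_nhds.mul ((continuous_id.matrix_det.tendsto Q).comp hX)

theorem tendsto_diagonal_inv_pow_mul_mul_nhds_zero {ι' κ : Type*} [Fintype ι'] (d : ι → K)
    (W : Matrix ι ι' K) {B : ℕ → Matrix ι' κ K}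
    (hB : ∀ i s ℓ, Tendsto (fun n => B n s ℓ / d i ^ n) atTop (𝓝 0)) :
    Tendsto (fun n => diagonal (fun i => (d i ^ n)⁻¹) * (W * B n)) atTop (𝓝 0) := by
  refine tendsto_pi_nhds.2 fun i => tendsto_pi_nhds.2 fun ℓ => ?_
  have h := tendsto_finsetSum univ fun s (_ : s ∈ univ) => (hB i s ℓ).const_mul (W i s)
  simp only [mul_zero, sum_const_zero] at h
  refine h.congr fun n => ?_
  rw [diagonal_mul, mul_apply, mul_sum]
  exact sum_congr rfl fun s _ => by ring

end Matrix

def powerMatrix {R ι : Type*} [Monoid R] (j : ℕ) (v : ι → R) : Matrix (Fin j) ι R :=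
  of fun s t => v t ^ (s : ℕ)

theorem det_powerMatrix_ne_zero {K : Type*} [Field K] {j : ℕ} {v : Fin j → K}
    (hv : Function.Injective v) : (powerMatrix j v).det ≠ 0 := by
  rw [show powerMatrix j v = (vandermonde v)ᵀ from rfl, det_transpose]
  exact det_vandermonde_ne_zero_iff.mpr hv

section Casorati

variable {m : ℕ} {r : Fin m → ℂ} {c : ℕ → Fin m → ℂ}

variable (r c) in
def leadMatrix (k j : ℕ) : Matrix (Fin m) (Fin j) ℂ :=
  of fun t ℓ => c (k + ℓ) t * r t ^ (k + ℓ + 1)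

theorem leadConst_eq_det_mul_det (k j : ℕ) (hj : j ≤ m) :
    leadConst m r c k j hj = (powerMatrix j (r ∘ Fin.castLE hj)).det *
      ((leadMatrix r c k j).submatrix (Fin.castLE hj) id).det := by
  rw [← det_mul, det_mul_eq_sum_det, leadConst]
  refine sum_congr rfl fun κ _ => congrArg det (ext fun s ℓ => ?_)
  simp only [of_apply, powerMatrix, leadMatrix, submatrix_apply, id, Function.comp_apply]
  ring

theorem casorati_matrix_eq {a b : ℕ → ℕ → ℂ}
    (ha : ∀ k n : ℕ, a k n = (∑ t, c k t * r t ^ (n + k + 1)) + b k n) (k j n : ℕ) :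
    (of fun s ℓ : Fin j => a (k + ℓ) (n + s)) =
      powerMatrix j r * diagonal (fun t => r t ^ n) * leadMatrix r c k j +
        of fun s ℓ : Fin j => b (k + ℓ) (n + s) := by
  ext s ℓ
  rw [Matrix.add_apply, mul_apply, of_apply, ha, of_apply]
  congr 1
  refine sum_congr rfl fun t _ => ?_
  rw [mul_diagonal]
  simp only [powerMatrix, leadMatrix, of_apply]
  ring

theorem tendsto_diagonal_inv_pow_mul_powerMatrix {j : ℕ} (hj : j ≤ m) (hr0 : ∀ t, r t ≠ 0)
    (hr : StrictAnti fun t => ‖r t‖) :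
    Tendsto (fun n => diagonal (fun i => (r (Fin.castLE hj i) ^ n)⁻¹) *
        ((powerMatrix j (r ∘ Fin.castLE hj))⁻¹ * powerMatrix j r) * diagonal (fun t => r t ^ n))
      atTop (𝓝 ((1 : Matrix (Fin m) (Fin m) ℂ).submatrix (Fin.castLE hj) id)) := by
  set V := powerMatrix j (r ∘ Fin.castLE hj)
  have hV : IsUnit V.det := (det_powerMatrix_ne_zero
    ((hr.injective.of_comp (f := norm)).comp (Fin.castLE_injective hj))).isUnit
  -- on the first `j` columns, `V⁻¹ * powerMatrix j r` is `V⁻¹ * V`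
  have hinv : ∀ i i', (V⁻¹ * powerMatrix j r) i (Fin.castLE hj i') = (1 : Matrix _ _ ℂ) i i' := by
    intro i i'
    rw [← nonsing_inv_mul V hV]
    rfl
  refine tendsto_pi_nhds.2 fun i => tendsto_pi_nhds.2 fun t => ?_
  simp only [diagonal_mul, mul_diagonal, submatrix_apply, id, one_apply]
  by_cases ht : (t : ℕ) < j
  · obtain ⟨i', rfl⟩ : ∃ i', Fin.castLE hj i' = t := ⟨⟨t, ht⟩, rfl⟩
    rw [hinv, one_apply]
    by_cases hi : i = i'
    · subst hi
      simp only [if_true]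
      refine tendsto_const_nhds.congr fun n => ?_
      rw [mul_one, inv_mul_cancel₀ (pow_ne_zero n (hr0 _))]
    · rw [if_neg hi, if_neg ((Fin.castLE_injective hj).ne hi)]
      simp
  · have hlt : Fin.castLE hj i < t := by rw [Fin.lt_def]; simp only [Fin.val_castLE]; omega
    rw [if_neg hlt.ne]
    have hq : ‖r t / r (Fin.castLE hj i)‖ < 1 := by
      rw [norm_div, div_lt_one (norm_pos_iff.mpr (hr0 _))]
      exact hr hlt
    have h := (tendsto_pow_atTop_nhds_zero_of_norm_lt_one hq).const_mul
      ((V⁻¹ * powerMatrix j r) i t)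
    rw [mul_zero] at h
    refine h.congr fun n => ?_
    rw [div_pow]
    ring

theorem tendsto_div_pow_nhds_zero_of_norm_le {F : ℕ → ℂ} {C q : ℝ} {z : ℂ} (hq : 0 ≤ q)
    (hqz : q < ‖z‖) (hF : ∀ n, ‖F n‖ ≤ C * q ^ n) :
    Tendsto (fun n => F n / z ^ n) atTop (𝓝 0) := by
  have hz : 0 < ‖z‖ := hq.trans_lt hqz
  refine squeeze_zero_norm (a := fun n => C * (q / ‖z‖) ^ n) (fun n => ?_) ?_
  · rw [norm_div, norm_pow, div_pow, ← mul_div_assoc]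
    gcongr
    exact hF n
  · simpa using (tendsto_pow_atTop_nhds_zero_of_lt_one (by positivity)
      ((div_lt_one hz).mpr hqz)).const_mul C

theorem tendsto_casorati_div_pow {a b : ℕ → ℕ → ℂ} {ρ μ : ℕ → ℝ} (hr0 : ∀ t, r t ≠ 0)
    (hr : StrictAnti fun t => ‖r t‖) (hρ0 : ∀ k, 0 ≤ ρ k) (hρr : ∀ k t, ρ k < ‖r t‖)
    (hb : ∀ k n : ℕ, ‖b k n‖ ≤ μ k * ρ k ^ n)
    (ha : ∀ k n : ℕ, a k n = (∑ t, c k t * r t ^ (n + k + 1)) + b k n) (k j : ℕ) (hj : j ≤ m) :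
    Tendsto (fun n => casorati a k j n / (∏ i : Fin j, r (Fin.castLE hj i)) ^ n) atTop
      (𝓝 (leadConst m r c k j hj)) := by
  set V := powerMatrix j (r ∘ Fin.castLE hj)
  have hV : IsUnit V.det := (det_powerMatrix_ne_zero
    ((hr.injective.of_comp (f := norm)).comp (Fin.castLE_injective hj))).isUnit
  have hremainder : ∀ (i s ℓ : Fin j), Tendsto (fun n => b (k + ℓ) (n + s) / r (Fin.castLE hj i) ^ n)
      atTop (𝓝 0) := fun i s ℓ =>
    tendsto_div_pow_nhds_zero_of_norm_le (C := μ (k + ℓ) * ρ (k + ℓ) ^ (s : ℕ)) (hρ0 _) (hρr _ _)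
      fun n => (hb _ _).trans_eq (by ring)
  have hlim := (((continuous_id.matrix_mul (continuous_const (y := leadMatrix r c k j))).tendsto
    _).comp (tendsto_diagonal_inv_pow_mul_powerMatrix hj hr0 hr)).add
    (tendsto_diagonal_inv_pow_mul_mul_nhds_zero _ V⁻¹ hremainder)
  rw [leadConst_eq_det_mul_det]
  refine tendsto_det_div_prod_pow hV (fun i => hr0 _) ?_
  rw [← submatrix_id_id (leadMatrix r c k j), ← Matrix.one_mul (leadMatrix r c k j),
    submatrix_mul _ _ _ id _ Function.bijective_id, ← add_zero (_ * _)]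
  refine hlim.congr fun n => ?_
  simp only [casorati_matrix_eq ha, Matrix.mul_add, Function.comp_apply, id_eq, Matrix.mul_assoc]
  rfl

theorem prod_castLE_succ {j : ℕ} (hj : j + 1 ≤ m) :
    ∏ i : Fin (j + 1), r (Fin.castLE hj i) =
      (∏ i : Fin j, r (Fin.castLE (Nat.le_of_succ_le hj) i)) * r ⟨j, hj⟩ :=
  Fin.prod_univ_castSucc _

theorem prod_castLE_mul_div_sq (hr0 : ∀ t, r t ≠ 0) {j : ℕ} (hj : j + 2 ≤ m) :
    (∏ i : Fin (j + 2), r (Fin.castLE hj i)) * (∏ i : Fin j, r (Fin.castLE (by omega) i)) /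
        ((∏ i : Fin (j + 1), r (Fin.castLE (by omega) i)) *
          ∏ i : Fin (j + 1), r (Fin.castLE (by omega) i)) =
      r ⟨j + 1, hj⟩ / r ⟨j, by omega⟩ := by
  rw [prod_castLE_succ (j := j + 1), prod_castLE_succ (j := j)]
  field_simp [prod_ne_zero_iff.2 fun i _ => hr0 _, hr0]

end Casorati

section Ratios

variable {K : Type*} [NormedField K]

theorem tendsto_mul_div_mul_div_pow {A B C D : ℕ → K} {α β γ δ x y z w : K}
    (hA : Tendsto (fun n => A n / α ^ n) atTop (𝓝 x))
    (hB : Tendsto (fun n => B n / β ^ n) atTop (𝓝 y))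
    (hC : Tendsto (fun n => C n / γ ^ n) atTop (𝓝 z))
    (hD : Tendsto (fun n => D n / δ ^ n) atTop (𝓝 w)) (hzw : z * w ≠ 0) :
    Tendsto (fun n => A n * B n / (C n * D n) / (α * β / (γ * δ)) ^ n) atTop
      (𝓝 (x * y / (z * w))) :=
  ((hA.mul hB).div (hC.mul hD) hzw).congr fun n => by
    rw [Pi.div_apply]
    ring

theorem tendsto_nhds_zero_of_tendsto_div_pow {f : ℕ → K} {q L : K} (hq0 : q ≠ 0) (hq : ‖q‖ < 1)
    (h : Tendsto (fun n => f n / q ^ n) atTop (𝓝 L)) : Tendsto f atTop (𝓝 0) := by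
  have h0 := h.mul (tendsto_pow_atTop_nhds_zero_of_norm_lt_one hq)
  rw [mul_zero] at h0
  exact h0.congr fun n => div_mul_cancel₀ _ (pow_ne_zero n hq0)

theorem eventually_ne_zero_of_tendsto_div_pow {f : ℕ → K} {q L : K} (hL : L ≠ 0)
    (h : Tendsto (fun n => f n / q ^ n) atTop (𝓝 L)) : ∀ᶠ n in atTop, f n ≠ 0 :=
  (h.eventually_ne hL).mono fun n hn h0 => hn (by rw [h0, zero_div])

theorem exists_forall_ge_mul_ne_zero_of_tendsto_div_pow {f g : ℕ → K} {p q x y : K}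
    (hx : x ≠ 0) (hy : y ≠ 0) (hf : Tendsto (fun n => f n / p ^ n) atTop (𝓝 x))
    (hg : Tendsto (fun n => g n / q ^ n) atTop (𝓝 y)) : ∃ N, ∀ n ≥ N, f n * g n ≠ 0 :=
  eventually_atTop.1 (((eventually_ne_zero_of_tendsto_div_pow hx hf).and
    (eventually_ne_zero_of_tendsto_div_pow hy hg)).mono fun _ hn => mul_ne_zero hn.1 hn.2)

end Ratios

theorem dhLV_auxiliary_convergence
    (M m : ℕ) (hm : 2 ≤ m)
    (a b : ℕ → ℕ → ℂ)
    (r : Fin m → ℂ) (c : ℕ → Fin m → ℂ) (ρ μ : ℕ → ℝ)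
    (hr0 : ∀ ℓ, r ℓ ≠ 0)
    (hrdec : ∀ ℓ₁ ℓ₂ : Fin m, ℓ₁ < ℓ₂ → ‖r ℓ₂‖ < ‖r ℓ₁‖)
    (hρpos : ∀ k, 0 < ρ k)
    (hρlt : ∀ k, ρ k < ‖r ⟨m - 1, by omega⟩‖)
    (hb : ∀ k n : ℕ, ‖b k n‖ ≤ μ k * ρ k ^ n)
    (ha : ∀ k n : ℕ, a k n = (∑ ℓ, c k ℓ * r ℓ ^ (n + k + 1)) + b k n)
    (hcnz : ∀ k ≤ M, ∀ j, ∀ h : j ≤ m, leadConst m r c k j h ≠ 0) :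
    (∀ i < M, ∀ j, 1 ≤ j → j ≤ m - 1 →
      (∃ N : ℕ, ∀ n ≥ N, casorati a i j n * casorati a (i + 1) j n ≠ 0) ∧
      Filter.Tendsto
        (fun n => casorati a i (j + 1) n * casorati a (i + 1) (j - 1) n /
          (casorati a i j n * casorati a (i + 1) j n))
        Filter.atTop (nhds 0)) ∧
    (∀ j, ∀ hjm : j ≤ m - 1,
      (∃ N : ℕ, ∀ n ≥ N, casorati a M j n * casorati a 0 (j + 1) n ≠ 0) ∧
      Filter.Tendsto
        (fun n => casorati a M (j + 1) n * casorati a 0 j n /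
          (casorati a M j n * casorati a 0 (j + 1) n))
        Filter.atTop
        (nhds (leadConst m r c M (j + 1) (by omega) * leadConst m r c 0 j (by omega) /
          (leadConst m r c M j (by omega) * leadConst m r c 0 (j + 1) (by omega))))) := by
  have hρr : ∀ k t, ρ k < ‖r t‖ := fun k t =>
    (hρlt k).trans_le (StrictAnti.antitone hrdec (Fin.le_iff_val_le_val.2 (by dsimp; omega)))
  have hlim := tendsto_casorati_div_pow hr0 hrdec (fun k => (hρpos k).le) hρr hb ha
  refine ⟨fun i hi j hj1 hjm => ?_, fun j hjm => ?_⟩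
  · obtain ⟨j, rfl⟩ : ∃ j', j = j' + 1 := ⟨j - 1, by omega⟩
    simp only [Nat.add_sub_cancel]
    refine ⟨exists_forall_ge_mul_ne_zero_of_tendsto_div_pow (hcnz i hi.le _ _) (hcnz (i + 1) hi _ _)
      (hlim i (j + 1) (by omega)) (hlim (i + 1) (j + 1) (by omega)), ?_⟩
    have hq : ‖r ⟨j + 1, by omega⟩ / r ⟨j, by omega⟩‖ < 1 := by
      rw [norm_div, div_lt_one (norm_pos_iff.2 (hr0 _))]
      exact hrdec _ _ (Fin.lt_def.2 (Nat.lt_succ_self j))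
    have h := tendsto_mul_div_mul_div_pow (hlim i (j + 2) (by omega)) (hlim (i + 1) j (by omega))
      (hlim i (j + 1) (by omega)) (hlim (i + 1) (j + 1) (by omega))
      (mul_ne_zero (hcnz i hi.le _ _) (hcnz (i + 1) hi _ _))
    rw [prod_castLE_mul_div_sq hr0] at h
    exact tendsto_nhds_zero_of_tendsto_div_pow (div_ne_zero (hr0 _) (hr0 _)) hq h
  · refine ⟨exists_forall_ge_mul_ne_zero_of_tendsto_div_pow (hcnz M le_rfl _ _)
      (hcnz 0 M.zero_le _ _) (hlim M j (by omega)) (hlim 0 (j + 1) (by omega)), ?_⟩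
    have h := tendsto_mul_div_mul_div_pow (hlim M (j + 1) (by omega)) (hlim 0 j (by omega))
      (hlim M j (by omega)) (hlim 0 (j + 1) (by omega))
      (mul_ne_zero (hcnz M le_rfl _ _) (hcnz 0 M.zero_le _ _))
    rw [mul_comm (∏ i : Fin (j + 1), _), div_self (mul_ne_zero (prod_ne_zero_iff.2 fun i _ => hr0 _)
      (prod_ne_zero_iff.2 fun i _ => hr0 _))] at h
    simpa only [one_pow, div_one] using h
end

section
/- Let M ≥ 1 and m ≥ 1 be integers. Let u_k^{(n)} (n ≥ 0) be complex numbers for k = 0, 1, …, (M+1)m−M−1, extended by the boundary convention u_k^{(n)} := 0 for −M ≤ k ≤ −1 and for (M+1)m−M ≤ k ≤ (M+1)m−1. Let δ^{(n)} be nonzero complex numbers converging to a nonzero limit δ as n → ∞. For k = M, M+1, …, (M+1)m−1 define v_k^{(n)} := u_{k−M}^{(n)} Π_{ℓ=1}^{M} (δ^{(n)} + u_{k−M−ℓ}^{(n)}), and assume δ^{(n)} + u_k^{(n)} ≠ 0 for all n ≥ 0 and all k in the extended index range. Assume that for every i = 0, 1, …, M−1 and every j ≥ 1 with i + j(M+1)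 ≤ (M+1)m−1, v_{i+j(M+1)}^{(n)} → 0 as n → ∞, and that for every j = 0, 1, …, m−1, v_{M+j(M+1)}^{(n)} → ĉ_j as n → ∞, where ĉ_j are complex constants with ĉ_j ≠ 0 and δ + ĉ_j/δ^M ≠ 0. Then, for every j = 0, 1, …, m−1, u_{j(M+1)}^{(n)} converges to the nonzero constant c̄_j := ĉ_j/δ^M as n → ∞, and for every i = 1, …, M with i + j(M+1) ≤ (M+1)m−M−1, u_{i+j(M+1)}^{(n)} converges to 0 as n → ∞. -/
/-!
Strong induction on `k`: `u_k = v_{k+M} / ∏_{ℓ=1}^{M} (δ + u_{k-ℓ})`, and the factors of the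
denominator converge to nonzero limits by the induction hypothesis. At `k = j (M+1)` none of the
`M` preceding indices is a multiple of `M + 1`, so the denominator tends to `δ^M` and
`u_k → ĉ_j / δ^M`; at every other `k` the numerator tends to `0`.
-/

open Filter Topology Finset

/-- The limit of `u_z`: `ĉ_j / δ^M` at `z = j (M+1)`, and `0` at every other index, negative ones
included. -/
noncomputable def dhLVLimit (M : ℕ) (cc : ℕ → ℂ) (δ : ℂ) : ℤ → ℂ
  | .ofNat k => if M + 1 ∣ k then cc (k / (M + 1)) / δ ^ M else 0
  | .negSucc _ => 0

theorem Nat.add_le_mul_sub_one_of_cast_le {a M m : ℕ} (h : (a : ℤ) + M ≤ (M + 1) * m - 1) :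
    a + M ≤ (M + 1) * m - 1 := by
  have h' : (a : ℤ) + M ≤ ((M + 1) * m : ℕ) - 1 := by push_cast; exact h
  omega

theorem Nat.le_sub_one_of_mul_add_le {q M m : ℕ}
    (h : ((q * (M + 1) : ℕ) : ℤ) + M ≤ (M + 1) * m - 1) : q ≤ m - 1 := by
  have : ((q + 1) * (M + 1) : ℤ) ≤ m * (M + 1) := by push_cast at h; linarith
  have := le_of_mul_le_mul_right this (by positivity)
  omega

theorem Nat.not_succ_dvd_add_mul {i q M : ℕ} (hi : 0 < i) (hiM : i ≤ M) :
    ¬ M + 1 ∣ i + q * (M + 1) :=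
  fun h => Nat.not_dvd_of_pos_of_lt hi (by omega) ((Nat.dvd_add_left (dvd_mul_left _ _)).1 h)

section dhLVLimit

variable {M m : ℕ} {cc : ℕ → ℂ} {δ : ℂ}

theorem dhLVLimit_mul (j : ℕ) : dhLVLimit M cc δ (j * (M + 1) : ℕ) = cc j / δ ^ M := by
  simp [dhLVLimit]

theorem dhLVLimit_of_not_dvd {k : ℕ} (hk : ¬ M + 1 ∣ k) : dhLVLimit M cc δ k = 0 :=
  if_neg hk

theorem dhLVLimit_add_mul {i q : ℕ} (hi : 0 < i) (hiM : i ≤ M) :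
    dhLVLimit M cc δ (i + q * (M + 1) : ℕ) = 0 :=
  dhLVLimit_of_not_dvd (Nat.not_succ_dvd_add_mul hi hiM)

theorem dhLVLimit_of_neg {z : ℤ} (hz : z < 0) : dhLVLimit M cc δ z = 0 := by
  cases z with
  | ofNat k => exact absurd hz (by simp)
  | negSucc _ => rfl

theorem dhLVLimit_sub_of_dvd {k ℓ : ℕ} (hk : M + 1 ∣ k) (hℓ : ℓ ∈ Icc 1 M) :
    dhLVLimit M cc δ ((k : ℤ) - ℓ) = 0 := by
  rw [mem_Icc] at hℓ
  rcases le_or_gt ℓ k with hℓk | hℓk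
  · rw [← Nat.cast_sub hℓk]
    refine dhLVLimit_of_not_dvd fun hdvd => ?_
    have := Nat.le_of_dvd (by omega) (Nat.sub_sub_self hℓk ▸ Nat.dvd_sub hk hdvd)
    omega
  · exact dhLVLimit_of_neg (by omega)

theorem prod_add_dhLVLimit_sub_of_dvd {k : ℕ} (hk : M + 1 ∣ k) :
    ∏ ℓ ∈ Icc 1 M, (δ + dhLVLimit M cc δ ((k : ℤ) - ℓ)) = δ ^ M := by
  rw [prod_congr rfl fun ℓ hℓ => by rw [dhLVLimit_sub_of_dvd hk hℓ, add_zero], prod_const,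
    Nat.card_Icc, Nat.add_sub_cancel]

theorem add_dhLVLimit_ne_zero (hδ : δ ≠ 0) (hcc : ∀ j ≤ m - 1, δ + cc j / δ ^ M ≠ 0) {z : ℤ}
    (hz : z + M ≤ (M + 1) * m - 1) : δ + dhLVLimit M cc δ z ≠ 0 := by
  cases z with
  | negSucc _ => simpa [dhLVLimit] using hδ
  | ofNat k =>
    by_cases hk : M + 1 ∣ k
    · obtain ⟨j, rfl⟩ := hk
      rw [Int.ofNat_eq_natCast, mul_comm, dhLVLimit_mul]
      refine hcc j ?_
      rw [Int.ofNat_eq_natCast, mul_comm] at hz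
      exact Nat.le_sub_one_of_mul_add_le hz
    · rwa [Int.ofNat_eq_natCast, dhLVLimit_of_not_dvd hk, add_zero]

end dhLVLimit

theorem tendsto_of_eq_mul_prod {α ι 𝕜 : Type*} [NormedField 𝕜] {l : Filter α} {s : Finset ι}
    {u v : α → 𝕜} {f : ι → α → 𝕜} {a : 𝕜} {b : ι → 𝕜}
    (huv : ∀ n, v n = u n * ∏ i ∈ s, f i n) (hf0 : ∀ n, ∏ i ∈ s, f i n ≠ 0)
    (hv : Tendsto v l (𝓝 (a * ∏ i ∈ s, b i))) (hf : ∀ i ∈ s, Tendsto (f i) l (𝓝 (b i)))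
    (hb : ∀ i ∈ s, b i ≠ 0) : Tendsto u l (𝓝 a) := by
  have := hv.div (tendsto_finsetProd s hf) (prod_ne_zero_iff.2 hb)
  rw [mul_div_cancel_right₀ _ (prod_ne_zero_iff.2 hb)] at this
  exact this.congr fun n => by rw [Pi.div_apply, huv, mul_div_cancel_right₀ _ (hf0 n)]

section dhLV

variable {M m : ℕ} {u : ℤ → ℕ → ℂ} {δ : ℕ → ℂ} {δlim : ℂ} {v : ℕ → ℕ → ℂ} {cc : ℕ → ℂ}

theorem tendsto_v_dhLVLimit
    (hv0 : ∀ i < M, ∀ j, 1 ≤ j → i + j * (M + 1) ≤ (M + 1) * m - 1 →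
      Tendsto (v (i + j * (M + 1))) atTop (𝓝 0))
    (hvc : ∀ j ≤ m - 1, Tendsto (v (M + j * (M + 1))) atTop (𝓝 (cc j)))
    (hδlim0 : δlim ≠ 0) {k : ℕ} (hk : (k : ℤ) + M ≤ (M + 1) * m - 1) :
    Tendsto (v (k + M)) atTop (𝓝 (dhLVLimit M cc δlim k *
      ∏ ℓ ∈ Icc 1 M, (δlim + dhLVLimit M cc δlim ((k : ℤ) - ℓ)))) := by
  obtain ⟨r, q, hr, rfl⟩ : ∃ r q, r < M + 1 ∧ k = r + q * (M + 1) :=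
    ⟨k % (M + 1), k / (M + 1), Nat.mod_lt _ (by omega), (Nat.mod_add_div' k (M + 1)).symm⟩
  rcases r with _ | i
  · rw [zero_add] at hk ⊢
    rw [dhLVLimit_mul, prod_add_dhLVLimit_sub_of_dvd (dvd_mul_left _ _),
      div_mul_cancel₀ _ (pow_ne_zero _ hδlim0), add_comm]
    exact hvc q (Nat.le_sub_one_of_mul_add_le hk)
  · rw [dhLVLimit_add_mul i.succ_pos (by omega), zero_mul]
    have hidx : i + 1 + q * (M + 1) + M = i + (q + 1) * (M + 1) := by ring
    rw [hidx]
    exact hv0 i (by omega) _ (by omega) (hidx ▸ Nat.add_le_mul_sub_one_of_cast_le hk)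

theorem tendsto_u_dhLVLimit (hδlim : Tendsto δ atTop (𝓝 δlim)) (hδlim0 : δlim ≠ 0)
    (hbd1 : ∀ z : ℤ, -(M : ℤ) ≤ z → z ≤ -1 → ∀ n, u z n = 0)
    (hne : ∀ z : ℤ, -(M : ℤ) ≤ z → z ≤ ((M : ℤ) + 1) * m - 1 → ∀ n, δ n + u z n ≠ 0)
    (hv : ∀ k : ℕ, M ≤ k → k ≤ (M + 1) * m - 1 → ∀ n,
      v k n = u ((k : ℤ) - M) n * ∏ ℓ ∈ Icc 1 M, (δ n + u ((k : ℤ) - M - (ℓ : ℤ)) n))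
    (hv0 : ∀ i < M, ∀ j, 1 ≤ j → i + j * (M + 1) ≤ (M + 1) * m - 1 →
      Tendsto (v (i + j * (M + 1))) atTop (𝓝 0))
    (hvc : ∀ j ≤ m - 1, Tendsto (v (M + j * (M + 1))) atTop (𝓝 (cc j)))
    (hccδ : ∀ j ≤ m - 1, δlim + cc j / δlim ^ M ≠ 0)
    (k : ℕ) (hk : (k : ℤ) + M ≤ (M + 1) * m - 1) :
    Tendsto (u k) atTop (𝓝 (dhLVLimit M cc δlim k)) := by
  induction k using Nat.strong_induction_on with
  | _ k ih =>
  have hfactor : ∀ ℓ ∈ Icc 1 M, Tendsto (fun n => δ n + u (k - ℓ) n) atTop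
      (𝓝 (δlim + dhLVLimit M cc δlim ((k : ℤ) - ℓ))) := by
    intro ℓ hℓ
    rw [mem_Icc] at hℓ
    refine hδlim.add ?_
    rcases le_or_gt ℓ k with hℓk | hℓk
    · rw [← Nat.cast_sub hℓk]
      exact ih _ (by omega) (by omega)
    · rw [dhLVLimit_of_neg (by omega)]
      exact tendsto_const_nhds.congr fun n => (hbd1 _ (by omega) (by omega) n).symm
  refine tendsto_of_eq_mul_prod (fun n => ?_) (fun n => prod_ne_zero_iff.2 fun ℓ hℓ => ?_)
    (tendsto_v_dhLVLimit hv0 hvc hδlim0 hk) hfactor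
    fun ℓ hℓ => add_dhLVLimit_ne_zero hδlim0 hccδ (by rw [mem_Icc] at hℓ; omega)
  · simpa using hv (k + M) (by omega) (Nat.add_le_mul_sub_one_of_cast_le hk) n
  · rw [mem_Icc] at hℓ
    exact hne _ (by omega) (by omega) n

end dhLV

theorem dhLV_convergence_general
    (M m : ℕ) (hm : 1 ≤ m)
    (u : ℤ → ℕ → ℂ) (δ : ℕ → ℂ) (δlim : ℂ)
    (hδlim0 : δlim ≠ 0)
    (hδlim : Filter.Tendsto δ Filter.atTop (nhds δlim))
    (hbd1 : ∀ z : ℤ, -(M : ℤ) ≤ z → z ≤ -1 → ∀ n, u z n = 0)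
    (hne : ∀ z : ℤ, -(M : ℤ) ≤ z → z ≤ ((M : ℤ) + 1) * m - 1 →
      ∀ n, δ n + u z n ≠ 0)
    (v : ℕ → ℕ → ℂ)
    (hv : ∀ k : ℕ, M ≤ k → k ≤ (M + 1) * m - 1 → ∀ n,
      v k n = u ((k : ℤ) - M) n *
        ∏ ℓ ∈ Finset.Icc 1 M, (δ n + u ((k : ℤ) - M - (ℓ : ℤ)) n))
    (cc : ℕ → ℂ)
    (hv0 : ∀ i < M, ∀ j, 1 ≤ j → i + j * (M + 1) ≤ (M + 1) * m - 1 →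
      Filter.Tendsto (v (i + j * (M + 1))) Filter.atTop (nhds 0))
    (hvc : ∀ j ≤ m - 1,
      Filter.Tendsto (v (M + j * (M + 1))) Filter.atTop (nhds (cc j)))
    (hcc0 : ∀ j ≤ m - 1, cc j ≠ 0)
    (hccδ : ∀ j ≤ m - 1, δlim + cc j / δlim ^ M ≠ 0) :
    ∀ j ≤ m - 1,
      (Filter.Tendsto (u ((j : ℤ) * ((M : ℤ) + 1))) Filter.atTop
          (nhds (cc j / δlim ^ M)) ∧
        cc j / δlim ^ M ≠ 0) ∧
      ∀ i : ℕ, 1 ≤ i → i ≤ M →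
        (i : ℤ) + (j : ℤ) * ((M : ℤ) + 1) ≤ ((M : ℤ) + 1) * m - M - 1 →
        Filter.Tendsto (u ((i : ℤ) + (j : ℤ) * ((M : ℤ) + 1))) Filter.atTop
          (nhds 0) := by
  have hlim := tendsto_u_dhLVLimit hδlim hδlim0 hbd1 hne hv hv0 hvc hccδ
  intro j hj
  refine ⟨⟨?_, div_ne_zero (hcc0 j hj) (pow_ne_zero _ hδlim0)⟩, fun i hi hiM hij => ?_⟩
  · have hjm : (j : ℤ) ≤ m - 1 := by omega
    have := hlim (j * (M + 1)) (by push_cast; nlinarith)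
    rwa [dhLVLimit_mul, Nat.cast_mul, Nat.cast_succ] at this
  · have := hlim (i + j * (M + 1)) (by push_cast; linarith)
    rwa [dhLVLimit_add_mul hi hiM, Nat.cast_add, Nat.cast_mul, Nat.cast_succ] at this

theorem dhLV_convergence
    (M m : ℕ) (hM : 1 ≤ M) (hm : 1 ≤ m)
    (u : ℤ → ℕ → ℂ) (δ : ℕ → ℂ) (δlim : ℂ)
    (hδ0 : ∀ n, δ n ≠ 0) (hδlim0 : δlim ≠ 0)
    (hδlim : Filter.Tendsto δ Filter.atTop (nhds δlim))
    (hbd1 : ∀ z : ℤ, -(M : ℤ) ≤ z → z ≤ -1 → ∀ n, u z n = 0)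
    (hbd2 : ∀ z : ℤ, ((M : ℤ) + 1) * m - M ≤ z → z ≤ ((M : ℤ) + 1) * m - 1 →
      ∀ n, u z n = 0)
    (hne : ∀ z : ℤ, -(M : ℤ) ≤ z → z ≤ ((M : ℤ) + 1) * m - 1 →
      ∀ n, δ n + u z n ≠ 0)
    (v : ℕ → ℕ → ℂ)
    (hv : ∀ k : ℕ, M ≤ k → k ≤ (M + 1) * m - 1 → ∀ n,
      v k n = u ((k : ℤ) - M) n *
        ∏ ℓ ∈ Finset.Icc 1 M, (δ n + u ((k : ℤ) - M - (ℓ : ℤ)) n))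
    (cc : ℕ → ℂ)
    (hv0 : ∀ i < M, ∀ j, 1 ≤ j → i + j * (M + 1) ≤ (M + 1) * m - 1 →
      Filter.Tendsto (v (i + j * (M + 1))) Filter.atTop (nhds 0))
    (hvc : ∀ j ≤ m - 1,
      Filter.Tendsto (v (M + j * (M + 1))) Filter.atTop (nhds (cc j)))
    (hcc0 : ∀ j ≤ m - 1, cc j ≠ 0)
    (hccδ : ∀ j ≤ m - 1, δlim + cc j / δlim ^ M ≠ 0) :
    ∀ j ≤ m - 1,
      (Filter.Tendsto (u ((j : ℤ) * ((M : ℤ) + 1))) Filter.atTop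
          (nhds (cc j / δlim ^ M)) ∧
        cc j / δlim ^ M ≠ 0) ∧
      ∀ i : ℕ, 1 ≤ i → i ≤ M →
        (i : ℤ) + (j : ℤ) * ((M : ℤ) + 1) ≤ ((M : ℤ) + 1) * m - M - 1 →
        Filter.Tendsto (u ((i : ℤ) + (j : ℤ) * ((M : ℤ) + 1))) Filter.atTop
          (nhds 0) :=
  dhLV_convergence_general M m hm u δ δlim hδlim0 hδlim hbd1 hne v hv cc hv0 hvc hcc0 hccδ
end
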